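/- arXiv:2306.05574 — 2 statements merged into one kernel-verified Lean document; each statement's English description precedes it below -/
import Mathlib

section
/- Let G be a 3-connected signed graph with adjacent edges e₁ = uv₁ and e₂ = uv₂ sharing a common vertex u. If G - u is unbalanced, then e₁ and e₂ are untied: there exist cycles of both signs containing both e₁ and e₂. -/
/-- A finite loopless signed multigraph. -/
structure SGraph : Type 1 where
  V : Type
  E : Type
  [fintV : Fintype V]
  [decV : DecidableEq V]
  [fintE : Fintype E]
  [decE : DecidableEq E]
  ends : E → Sym2 V
  loopless : ∀ e, ¬ (ends e).IsDiag
  sgn : E → ℤˣ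

attribute [instance] SGraph.fintV SGraph.decV SGraph.fintE SGraph.decE

namespace SGraph

variable (G : SGraph)

/-- Degree of a vertex in an edge set. -/
noncomputable def deg (S : Set G.E) (v : G.V) : ℕ := {e ∈ S | v ∈ G.ends e}.ncard

/-- The sign of an edge set: the product of the signs of its edges. -/
noncomputable def signOf (S : Set G.E) : ℤˣ := ∏ᶠ e ∈ S, G.sgn e

/-- An edge set is connected: any two of its edges are linked by a chain of
edges of the set, consecutive ones sharing a vertex. -/
def conn (S : Set G.E) : Prop :=
  ∀ e ∈ S, ∀ f ∈ S,
    Relation.ReflTransGen (fun a b => a ∈ S ∧ b ∈ S ∧ ∃ v, v ∈ G.ends a ∧ v ∈ G.ends b) e f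

/-- An edge set is (the edge set of) a cycle: nonempty, every vertex has degree 0 or 2,
and it is connected. -/
def IsCycle (S : Set G.E) : Prop :=
  S.Nonempty ∧ (∀ v, G.deg S v = 0 ∨ G.deg S v = 2) ∧ G.conn S

/-- The vertices covered by an edge set. -/
def verts (S : Set G.E) : Set G.V := {v | ∃ e ∈ S, v ∈ G.ends e}

/-- Two edges are untied: there are cycles of both signs through both edges. -/
def Untied (e₁ e₂ : G.E) : Prop :=
  (∃ C, G.IsCycle C ∧ e₁ ∈ C ∧ e₂ ∈ C ∧ G.signOf C = 1) ∧
  (∃ C, G.IsCycle C ∧ e₁ ∈ C ∧ e₂ ∈ C ∧ G.signOf C = -1)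

/-- Two edges are tied: all cycles through both have the same sign. -/
def Tied (e₁ e₂ : G.E) : Prop :=
  ∀ C C', G.IsCycle C → G.IsCycle C' → e₁ ∈ C → e₂ ∈ C → e₁ ∈ C' → e₂ ∈ C' →
    G.signOf C = G.signOf C'

/-- A signed graph is balanced if every cycle is positive. -/
def Balanced : Prop := ∀ C, G.IsCycle C → G.signOf C = 1

/-- Reachability between vertices avoiding a forbidden vertex set `S`. -/
def ReachOutside (S : Set G.V) : G.V → G.V → Prop :=
  Relation.ReflTransGen (fun a b => a ∉ S ∧ b ∉ S ∧ ∃ e, G.ends e = s(a, b))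

/-- The graph minus the vertex set `S` is connected. -/
def ConnOutside (S : Set G.V) : Prop :=
  ∀ u v : G.V, u ∉ S → v ∉ S → G.ReachOutside S u v

/-- `k`-connectivity: more than `k` vertices, and removing fewer than `k` vertices
leaves a connected graph. -/
def KConnected (k : ℕ) : Prop :=
  k + 1 ≤ Fintype.card G.V ∧ ∀ S : Set G.V, S.ncard < k → G.ConnOutside S

/-- `P` is the edge set of a path from `a` to `b` (possibly trivial when `a = b`). -/
def IsPath (P : Set G.E) (a b : G.V) : Prop :=
  (a = b ∧ P = ∅) ∨
  (a ≠ b ∧ P.Nonempty ∧ G.deg P a = 1 ∧ G.deg P b = 1 ∧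
    (∀ v, v ≠ a → v ≠ b → G.deg P v = 0 ∨ G.deg P v = 2) ∧ G.conn P)

/-- The vertices of a path from `a` to `b`, including its ends. -/
def pverts (P : Set G.E) (a b : G.V) : Set G.V := G.verts P ∪ {a, b}

/-- An edge set is an edge-cut `δ(X)`. -/
def EdgeCut (S : Set G.E) : Prop :=
  ∃ X : Set G.V, ∀ e, e ∈ S ↔ ∃ a b, G.ends e = s(a, b) ∧ a ∈ X ∧ b ∉ X

/-- A signed graph is simple if no two distinct edges are parallel. -/
def Simple : Prop := ∀ e f : G.E, G.ends e = G.ends f → e = f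

end SGraph

/-!
The cycle `N` avoids `u`, so its vertex set `T` has at least two vertices and misses `u`.
Keeping at `u` only the edges to `v₁` and `v₂` and adding an apex joined to `T` turns the
3-connected graph `G` into a 2-connected one; by Whitney's theorem `u` and the apex lie on a
common cycle, which yields disjoint paths `p₁`, `p₂` in `G - u` from `v₁`, `v₂` to vertices
`t₁ ≠ t₂` of `T`, meeting `T` only there. The two arcs `M₁`, `M₂` of `N` between `t₁` and `t₂`
close `e₁ p₁ Mᵢ p₂⁻¹ e₂` into two cycles through `e₁` and `e₂`. They differ only in the arc, so
the product of their signs is the sign of `N`, which is `-1`.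
-/

namespace SGraph

variable {G : SGraph}

lemma ne_of_ends_eq {e : G.E} {a b : G.V} (he : G.ends e = s(a, b)) : a ≠ b := fun h =>
  G.loopless e (by rw [he, h]; exact Sym2.mk_isDiag_iff.mpr rfl)

lemma exists_ends_eq (e : G.E) : ∃ a b, G.ends e = s(a, b) := by
  induction G.ends e using Sym2.ind with
  | h a b => exact ⟨a, b, rfl⟩

lemma exists_ends_eq_of_mem {e : G.E} {v : G.V} (hv : v ∈ G.ends e) : ∃ b, G.ends e = s(b, v) := by
  obtain ⟨p, q, hpq⟩ := exists_ends_eq e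
  rw [hpq, Sym2.mem_iff] at hv
  rcases hv with rfl | rfl
  exacts [⟨q, hpq.trans Sym2.eq_swap⟩, ⟨p, hpq⟩]

/-- Walks remember the edges they use, so that parallel edges of different signs are told
apart. -/
inductive Walk (G : SGraph) : G.V → G.V → Type
  | nil {a : G.V} : Walk G a a
  | cons {a b c : G.V} (e : G.E) (he : G.ends e = s(a, b)) (w : Walk G b c) : Walk G a c

namespace Walk

@[simp] def support {a b : G.V} : Walk G a b → List G.V
  | .nil => [a]
  | .cons _ _ w => a :: w.support

@[simp] def edges {a b : G.V} : Walk G a b → List G.E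
  | .nil => []
  | .cons e _ w => e :: w.edges

@[simp] def append {a b c : G.V} : Walk G a b → Walk G b c → Walk G a c
  | .nil, w => w
  | .cons e he w, w' => .cons e he (w.append w')

@[simp] def reverse {a b : G.V} : Walk G a b → Walk G b a
  | .nil => .nil
  | .cons e he w => w.reverse.append (.cons e (he.trans Sym2.eq_swap) .nil)

def sign {a b : G.V} (w : Walk G a b) : ℤˣ := (w.edges.map G.sgn).prod

variable {a b c x y : G.V}

@[simp] lemma start_mem_support (w : Walk G a b) : a ∈ w.support := by
  cases w <;> simp

@[simp] lemma end_mem_support (w : Walk G a b) : b ∈ w.support := by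
  induction w <;> simp [*]

lemma support_eq_cons (w : Walk G a b) : w.support = a :: w.support.tail := by
  cases w <;> simp

@[simp] lemma support_append (w : Walk G a b) (w' : Walk G b c) :
    (w.append w').support = w.support ++ w'.support.tail := by
  induction w with
  | nil => cases w' <;> simp
  | cons e he w ih => simp [ih]

@[simp] lemma edges_append (w : Walk G a b) (w' : Walk G b c) :
    (w.append w').edges = w.edges ++ w'.edges := by
  induction w <;> simp [*]

lemma mem_support_append_iff (w : Walk G a b) (w' : Walk G b c) {v : G.V} :
    v ∈ (w.append w').support ↔ v ∈ w.support ∨ v ∈ w'.support := by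
  rw [support_append, List.mem_append]
  refine ⟨Or.imp_right List.mem_of_mem_tail, fun h => h.elim Or.inl fun h => ?_⟩
  rw [support_eq_cons w'] at h
  rcases List.mem_cons.mp h with rfl | h
  exacts [Or.inl w.end_mem_support, Or.inr h]

@[simp] lemma support_reverse (w : Walk G a b) : w.reverse.support = w.support.reverse := by
  induction w <;> simp [*]

@[simp] lemma edges_reverse (w : Walk G a b) : w.reverse.edges = w.edges.reverse := by
  induction w <;> simp [*]

@[simp] lemma sign_nil : (nil : Walk G a a).sign = 1 := rfl

@[simp] lemma sign_cons (e : G.E) (he : G.ends e = s(a, b)) (w : Walk G b c) :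
    (cons e he w).sign = G.sgn e * w.sign := rfl

@[simp] lemma sign_append (w : Walk G a b) (w' : Walk G b c) :
    (w.append w').sign = w.sign * w'.sign := by
  simp [sign]

@[simp] lemma sign_reverse (w : Walk G a b) : w.reverse.sign = w.sign := by
  simp [sign, List.prod_reverse]

lemma mem_support_of_mem_edges {w : Walk G a b} {e : G.E} {v : G.V}
    (he : e ∈ w.edges) (hv : v ∈ G.ends e) : v ∈ w.support := by
  induction w with
  | nil => simp at he
  | cons f hf w ih =>
    rcases List.mem_cons.mp he with rfl | he
    · rw [hf, Sym2.mem_iff] at hv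
      rcases hv with rfl | rfl <;> simp
    · simp [ih he]

lemma exists_mem_edges_of_mem_support {w : Walk G a b} (hw : w.edges ≠ [])
    {v : G.V} (hv : v ∈ w.support) : ∃ e ∈ w.edges, v ∈ G.ends e := by
  induction w with
  | nil => simp at hw
  | cons f hf w ih =>
    rcases List.mem_cons.mp hv with rfl | hv
    · exact ⟨f, by simp, by simp [hf]⟩
    · cases w with
      | nil => exact ⟨f, by simp, by simp_all⟩
      | cons g hg w =>
        obtain ⟨e, he, hve⟩ := ih (by simp) hv
        exact ⟨e, List.mem_cons_of_mem _ he, hve⟩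

lemma edges_nodup_of_support_nodup {w : Walk G a b} (h : w.support.Nodup) :
    w.edges.Nodup := by
  induction w with
  | nil => simp
  | cons e he w ih =>
    rw [support, List.nodup_cons] at h
    exact List.nodup_cons.mpr
      ⟨fun hew => h.1 (mem_support_of_mem_edges hew (by simp [he])), ih h.2⟩

lemma support_nodup_append {w : Walk G a b} {w' : Walk G b c} (hw : w.support.Nodup)
    (hw' : w'.support.Nodup) (hdisj : ∀ v ∈ w.support, v ∈ w'.support → v = b) :
    (w.append w').support.Nodup := by
  rw [support_eq_cons w'] at hw' hdisj
  rw [support_append]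
  refine List.nodup_append.mpr ⟨hw, (List.nodup_cons.mp hw').2, ?_⟩
  rintro v hv _ hv' rfl
  exact (List.nodup_cons.mp hw').1 (hdisj v hv (List.mem_cons_of_mem _ hv') ▸ hv')

lemma end_mem_support_tail (w : Walk G a b) (h : a ≠ b) : b ∈ w.support.tail := by
  cases w with
  | nil => exact absurd rfl h
  | cons e he w => simp

lemma support_tail_append (w : Walk G a b) (w' : Walk G b c) :
    (w.append w').support.tail = w.support.tail ++ w'.support.tail := by
  rw [support_append, support_eq_cons w]
  rfl

lemma exists_eq_append_of_mem_support {w : Walk G a b} (h : x ∈ w.support) :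
    ∃ (w₁ : Walk G a x) (w₂ : Walk G x b), w = w₁.append w₂ := by
  induction w with
  | nil =>
    obtain rfl : x = _ := by simpa using h
    exact ⟨nil, nil, rfl⟩
  | cons e he w ih =>
    rcases List.mem_cons.mp h with rfl | h
    · exact ⟨nil, _, rfl⟩
    · obtain ⟨w₁, w₂, rfl⟩ := ih h
      exact ⟨cons e he w₁, w₂, rfl⟩

lemma support_nodup_of_append_left {w : Walk G a b} {w' : Walk G b c}
    (h : (w.append w').support.Nodup) : w.support.Nodup := by
  rw [support_append] at h
  exact (List.nodup_append.mp h).1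

lemma support_nodup_of_append_right {w : Walk G a b} {w' : Walk G b c}
    (h : (w.append w').support.Nodup) : w'.support.Nodup := by
  rw [support_append] at h
  obtain ⟨-, htail, hdisj⟩ := List.nodup_append.mp h
  rw [support_eq_cons w']
  exact List.nodup_cons.mpr ⟨fun hb => hdisj b w.end_mem_support b hb rfl, htail⟩

lemma exists_eq_append_first (w : Walk G a b) (P : G.V → Prop) (h : ∃ v ∈ w.support, P v) :
    ∃ (c : G.V) (w₁ : Walk G a c) (w₂ : Walk G c b), w = w₁.append w₂ ∧ P c ∧
      ∀ v ∈ w₁.support, P v → v = c := by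
  induction w with
  | nil =>
    obtain ⟨v, hv, hPv⟩ := h
    obtain rfl : v = _ := by simpa using hv
    exact ⟨_, nil, nil, rfl, hPv, by simp⟩
  | @cons a a' b e he w ih =>
    by_cases hPa : P a
    · exact ⟨a, nil, _, rfl, hPa, by simp⟩
    · obtain ⟨v, hv, hPv⟩ := h
      have hv' : v ∈ w.support := (List.mem_cons.mp hv).resolve_left (by rintro rfl; exact hPa hPv)
      obtain ⟨c, w₁, w₂, rfl, hPc, hfirst⟩ := ih ⟨v, hv', hPv⟩
      refine ⟨c, cons e he w₁, w₂, rfl, hPc, ?_⟩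
      intro x hx hPx
      rcases List.mem_cons.mp hx with rfl | hx
      exacts [absurd hPx hPa, hfirst x hx hPx]

lemma exists_path_subset (w : Walk G a b) :
    ∃ p : Walk G a b, p.support.Nodup ∧ p.support ⊆ w.support ∧ p.edges ⊆ w.edges := by
  induction w with
  | nil => exact ⟨nil, by simp, List.Subset.refl _, List.Subset.refl _⟩
  | @cons a a' b e he w ih =>
    obtain ⟨p, hp, hpv, hpe⟩ := ih
    by_cases ha : a ∈ p.support
    · obtain ⟨p₁, p₂, rfl⟩ := exists_eq_append_of_mem_support ha
      refine ⟨p₂, support_nodup_of_append_right hp, fun v hv => ?_, fun f hf => ?_⟩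
      · exact List.mem_cons_of_mem _ (hpv ((mem_support_append_iff _ _).mpr (Or.inr hv)))
      · exact List.mem_cons_of_mem _ (hpe (by simp [hf]))
    · exact ⟨cons e he p, List.nodup_cons.mpr ⟨ha, hp⟩, List.cons_subset_cons _ hpv,
        List.cons_subset_cons _ hpe⟩

lemma exists_walk_of_reachOutside {S : Set G.V} (h : G.ReachOutside S a b) (ha : a ∉ S) :
    ∃ w : Walk G a b, ∀ v ∈ w.support, v ∉ S := by
  induction h using Relation.ReflTransGen.head_induction_on with
  | refl => exact ⟨nil, by simpa using ha⟩
  | head hac _ ih =>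
    obtain ⟨-, hc, e, he⟩ := hac
    obtain ⟨w, hw⟩ := ih hc
    exact ⟨cons e he w, by simpa [ha] using hw⟩

lemma reachOutside_of_walk {S : Set G.V} (w : Walk G a b) (hw : ∀ v ∈ w.support, v ∉ S) :
    G.ReachOutside S a b := by
  induction w with
  | nil => exact .refl
  | @cons a a' b e he w ih =>
    simp only [support, List.mem_cons, forall_eq_or_imp] at hw
    exact .head ⟨hw.1, hw.2 a' w.start_mem_support, e, he⟩ (ih hw.2)

/-- `edges_nodup` rules out running back and forth along a single edge, which
`support_tail_nodup` allows. -/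
structure IsCycle (w : Walk G a a) : Prop where
  edges_ne_nil : w.edges ≠ []
  support_tail_nodup : w.support.tail.Nodup
  edges_nodup : w.edges.Nodup

lemma isCycle_cons {e : G.E} (he : G.ends e = s(a, b)) {p : Walk G b a} (hp : p.support.Nodup)
    (hep : e ∉ p.edges) : (cons e he p).IsCycle :=
  ⟨by simp, hp, List.nodup_cons.mpr ⟨hep, edges_nodup_of_support_nodup hp⟩⟩

lemma IsCycle.rotate {K : Walk G a a} (hK : K.IsCycle) (hx : x ∈ K.support) :
    ∃ K' : Walk G x x, K'.IsCycle ∧ (∀ v, v ∈ K'.support ↔ v ∈ K.support) ∧ K'.sign = K.sign := by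
  obtain ⟨w₁, w₂, rfl⟩ := exists_eq_append_of_mem_support hx
  have hedges : List.Perm (w₂.append w₁).edges (w₁.append w₂).edges := by
    simpa using List.perm_append_comm
  refine ⟨w₂.append w₁, ⟨fun h => hK.edges_ne_nil (h ▸ hedges).symm.eq_nil, ?_,
    hedges.nodup_iff.mpr hK.edges_nodup⟩, fun v => ?_, by simp [mul_comm]⟩
  · have := hK.support_tail_nodup
    rw [support_tail_append] at this ⊢
    exact List.perm_append_comm.nodup_iff.mp this
  · simp only [mem_support_append_iff, or_comm]

lemma IsCycle.exists_paths {K : Walk G a a} (hK : K.IsCycle) (hx : x ∈ K.support)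
    (hy : y ∈ K.support) (hxy : x ≠ y) :
    ∃ B C : Walk G x y, B.support.Nodup ∧ C.support.Nodup ∧
      (∀ v ∈ B.support, v ∈ C.support → v = x ∨ v = y) ∧ (∀ e ∈ B.edges, e ∉ C.edges) ∧
      (∀ v, v ∈ K.support ↔ v ∈ B.support ∨ v ∈ C.support) ∧ B.sign * C.sign = K.sign := by
  obtain ⟨K', hK', hK'mem, hK'sign⟩ := hK.rotate hx
  obtain ⟨B, C, rfl⟩ := exists_eq_append_of_mem_support ((hK'mem y).mpr hy)
  have htail := hK'.support_tail_nodup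
  rw [support_tail_append, List.nodup_append] at htail
  obtain ⟨hBtail, hCtail, hdisj⟩ := htail
  have hyB := B.end_mem_support_tail hxy
  have hxC := C.end_mem_support_tail hxy.symm
  have hB : B.support.Nodup := by
    rw [support_eq_cons B]
    exact List.nodup_cons.mpr ⟨fun h => hdisj x h x hxC rfl, hBtail⟩
  have hC : C.support.Nodup := by
    rw [support_eq_cons C]
    exact List.nodup_cons.mpr ⟨fun h => hdisj y hyB y h rfl, hCtail⟩
  refine ⟨B, C.reverse, hB, by simpa using hC, fun v hvB hvC => ?_, fun e heB heC => ?_,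
    fun v => ?_, by rw [← hK'sign]; simp⟩
  · rw [support_reverse, List.mem_reverse, support_eq_cons C] at hvC
    rw [support_eq_cons B] at hvB
    rcases List.mem_cons.mp hvB with rfl | hvB
    · exact Or.inl rfl
    rcases List.mem_cons.mp hvC with rfl | hvC
    · exact Or.inr rfl
    exact absurd rfl (hdisj v hvB v hvC)
  · have := hK'.edges_nodup
    rw [edges_append, List.nodup_append] at this
    exact this.2.2 e heB e (by simpa using heC) rfl
  · rw [← hK'mem, mem_support_append_iff, support_reverse, List.mem_reverse]

lemma two_mul_count_support (w : Walk G a b) (v : G.V) :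
    2 * w.support.count v = w.edges.countP (v ∈ G.ends ·) +
      (if v = a then 1 else 0) + (if v = b then 1 else 0) := by
  induction w with
  | @nil a => by_cases h : v = a <;> simp [h, eq_comm]
  | @cons a a' b e he w ih =>
    have hne := ne_of_ends_eq he
    simp only [support, edges, List.count_cons, List.countP_cons, he, Sym2.mem_iff,
      beq_iff_eq, decide_eq_true_eq]
    by_cases h : v = a
    · subst h
      simp [hne] at ih ⊢
      omega
    · simp [h, Ne.symm h] at ih ⊢
      omega

lemma IsCycle.countP_ends {K : Walk G a a} (hK : K.IsCycle) (v : G.V) :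
    K.edges.countP (v ∈ G.ends ·) = if v ∈ K.support then 2 else 0 := by
  have key := K.two_mul_count_support v
  have ha : a ∈ K.support.tail := by
    cases K with
    | nil => exact absurd rfl hK.edges_ne_nil
    | cons e he w => simp
  have hmem : v ∈ K.support ↔ v ∈ K.support.tail := by
    rw [support_eq_cons K, List.mem_cons]
    exact ⟨fun h => h.elim (· ▸ ha) id, Or.inr⟩
  rw [support_eq_cons K, List.count_cons] at key
  simp only [beq_iff_eq, eq_comm (a := a)] at key
  simp only [hmem]
  split_ifs with hv
  · rw [List.count_eq_one_of_mem hK.support_tail_nodup hv] at key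
    split_ifs at key <;> omega
  · have h : v ≠ a := fun h => hv (h ▸ ha)
    rw [List.count_eq_zero_of_not_mem hv] at key
    simp only [h, if_false] at key
    omega

lemma deg_setOf_mem_edges {w : Walk G a b} (hw : w.edges.Nodup) (v : G.V) :
    G.deg {e | e ∈ w.edges} v = w.edges.countP (v ∈ G.ends ·) := by
  have h : {e ∈ {e | e ∈ w.edges} | v ∈ G.ends e} =
      ↑(w.edges.filter (v ∈ G.ends ·)).toFinset := by
    ext e; simp
  rw [deg, h, Set.ncard_coe_finset, List.toFinset_card_of_nodup (hw.filter _),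
    List.countP_eq_length_filter]

lemma signOf_setOf_mem_edges {w : Walk G a b} (hw : w.edges.Nodup) :
    G.signOf {e | e ∈ w.edges} = w.sign := by
  have h : {e | e ∈ w.edges} = ↑w.edges.toFinset := by ext e; simp
  rw [signOf, h, finprod_mem_coe_finset, List.prod_toFinset _ hw, sign]

/-- The relation whose reflexive-transitive closure defines `SGraph.conn`. -/
abbrev Touch (G : SGraph) (S : Set G.E) (e f : G.E) : Prop :=
  e ∈ S ∧ f ∈ S ∧ ∃ v, v ∈ G.ends e ∧ v ∈ G.ends f

instance (S : Set G.E) : Std.Symm (Touch G S) :=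
  ⟨fun _ _ ⟨he, hf, v, hve, hvf⟩ => ⟨hf, he, v, hvf, hve⟩⟩

lemma reflTransGen_touch_of_mem_edges {S : Set G.E} {e : G.E} (he : G.ends e = s(a, b))
    (w : Walk G b c) (hS : ∀ f ∈ (cons e he w).edges, f ∈ S) :
    ∀ f ∈ (cons e he w).edges, Relation.ReflTransGen (Touch G S) e f := by
  induction w generalizing a e with
  | nil => simp +contextual [Relation.ReflTransGen.refl]
  | @cons b b' c e' he' w ih =>
    intro f hf
    rcases List.mem_cons.mp hf with rfl | hf
    · exact .refl
    · refine .head ⟨hS e (by simp), hS e' (by simp), b, by simp [he], by simp [he']⟩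
        (ih he' (fun g hg => hS g (List.mem_cons_of_mem _ hg)) f hf)

lemma conn_setOf_mem_edges (w : Walk G a b) : G.conn {e | e ∈ w.edges} := by
  intro e he f hf
  cases w with
  | nil => simp at he
  | cons e₀ he₀ w =>
    have h := reflTransGen_touch_of_mem_edges (S := {e | e ∈ (cons e₀ he₀ w).edges}) he₀ w
      (fun _ hg => hg)
    exact (Std.Symm.symm _ _ (h e he)).trans (h f hf)

lemma IsCycle.isCycle_setOf {K : Walk G a a} (hK : K.IsCycle) : G.IsCycle {e | e ∈ K.edges} := by
  refine ⟨List.exists_mem_of_ne_nil _ hK.edges_ne_nil, fun v => ?_, conn_setOf_mem_edges K⟩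
  rw [deg_setOf_mem_edges hK.edges_nodup, hK.countP_ends]
  split_ifs <;> simp

end Walk

open Walk

section Cycle

variable {S : Set G.E} {a b v : G.V}

lemma Walk.countP_ends_add {w : Walk G a b} (hw : w.support.Nodup) (hv : v ∈ w.support) :
    w.edges.countP (v ∈ G.ends ·) + (if v = a then 1 else 0) + (if v = b then 1 else 0) = 2 := by
  rw [← w.two_mul_count_support v, List.count_eq_one_of_mem hw hv]

lemma IsCycle.exists_not_mem_edges_iff (hS : G.IsCycle S) {w : Walk G a b}
    (hwS : ∀ e ∈ w.edges, e ∈ S) (hw : w.edges.Nodup) (hv : ∃ e ∈ S, v ∈ G.ends e) :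
    (∃ f ∈ S, v ∈ G.ends f ∧ f ∉ w.edges) ↔ w.edges.countP (v ∈ G.ends ·) < 2 := by
  have hsub : {e ∈ {e | e ∈ w.edges} | v ∈ G.ends e} ⊆ {e ∈ S | v ∈ G.ends e} :=
    fun e ⟨he, hve⟩ => ⟨hwS e he, hve⟩
  have hdeg : G.deg S v = 2 := by
    obtain ⟨e, he, hve⟩ := hv
    refine (hS.2.1 v).resolve_left fun h => ?_
    rw [deg, Set.ncard_eq_zero] at h
    exact h.subset ⟨he, hve⟩
  rw [← deg_setOf_mem_edges hw, ← hdeg, deg, deg]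
  constructor
  · rintro ⟨f, hf, hvf, hfw⟩
    exact Set.ncard_lt_ncard
      ((Set.ssubset_iff_of_subset hsub).mpr ⟨f, ⟨hf, hvf⟩, fun h => hfw h.1⟩)
  · intro hlt
    by_contra! h
    exact hlt.not_ge (Set.ncard_le_ncard fun f ⟨hf, hvf⟩ => ⟨h f hf hvf, hvf⟩)

/-- A path along a cycle `S` extends greedily, one edge of `S` at a time, until it closes up. -/
theorem IsCycle.exists_walk_of_path (hS : G.IsCycle S) {a x₀ : G.V} (w : Walk G a x₀)
    (hwS : ∀ e ∈ w.edges, e ∈ S) (hw : w.support.Nodup) (hax : a ≠ x₀) :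
    ∃ K : Walk G x₀ x₀, K.IsCycle ∧ (∀ e ∈ K.edges, e ∈ S) ∧ ∀ e ∈ w.edges, e ∈ K.edges := by
  have hnd := edges_nodup_of_support_nodup hw
  have hcount := countP_ends_add hw (v := a) w.start_mem_support
  simp only [if_neg hax, if_true] at hcount
  have hS_a : ∃ e ∈ S, a ∈ G.ends e := by
    cases w with
    | nil => exact absurd rfl hax
    | cons e he w => exact ⟨e, hwS e (by simp), by simp [he]⟩
  obtain ⟨f, hfS, haf, hfw⟩ := (hS.exists_not_mem_edges_iff hwS hnd hS_a).mpr (by omega)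
  obtain ⟨a', hf⟩ := exists_ends_eq_of_mem haf
  have hfS' : ∀ e ∈ (cons f hf w).edges, e ∈ S := by simpa [hfS] using hwS
  by_cases ha' : a' ∈ w.support
  · obtain rfl : a' = x₀ := by
      by_contra hx
      have h2 := countP_ends_add hw ha'
      simp only [if_neg (ne_of_ends_eq hf), if_neg hx] at h2
      have := (hS.exists_not_mem_edges_iff (v := a') hwS hnd ⟨f, hfS, by simp [hf]⟩).mp
        ⟨f, hfS, by simp [hf], hfw⟩
      omega
    exact ⟨cons f hf w, isCycle_cons hf hw hfw, hfS', by simp +contextual⟩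
  · have hlen : (cons f hf w).support.length ≤ Fintype.card G.V :=
      (List.nodup_cons.mpr ⟨ha', hw⟩).length_le_card
    obtain ⟨K, hK, hKS, hwK⟩ := hS.exists_walk_of_path (cons f hf w) hfS'
      (List.nodup_cons.mpr ⟨ha', hw⟩) (fun h => ha' (h ▸ w.end_mem_support))
    exact ⟨K, hK, hKS, fun e he => hwK e (List.mem_cons_of_mem _ he)⟩
termination_by Fintype.card G.V - w.support.length
decreasing_by simp only [support, List.length_cons] at hlen ⊢; omega

theorem IsCycle.exists_walk (hS : G.IsCycle S) :
    ∃ (a : G.V) (K : Walk G a a), K.IsCycle ∧ {e | e ∈ K.edges} = S := by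
  obtain ⟨e₀, he₀⟩ := hS.1
  obtain ⟨x₀, x₁, hx⟩ := exists_ends_eq e₀
  obtain ⟨K, hK, hKS, he₀K⟩ := hS.exists_walk_of_path (cons e₀ (hx.trans Sym2.eq_swap) nil)
    (by simpa using he₀) (by simp [(ne_of_ends_eq hx).symm]) (ne_of_ends_eq hx).symm
  refine ⟨x₀, K, hK, Set.Subset.antisymm hKS fun g hg => ?_⟩
  refine Relation.ReflTransGen.head_induction_on (hS.2.2 g hg e₀ he₀) (he₀K e₀ (by simp)) ?_
  rintro g c ⟨hg, -, v, hvg, hvc⟩ - hcK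
  by_contra hgK
  have hv := mem_support_of_mem_edges hcK hvc
  have := (hS.exists_not_mem_edges_iff hKS hK.edges_nodup ⟨g, hg, hvg⟩).mp ⟨g, hg, hvg, hgK⟩
  rw [hK.countP_ends, if_pos hv] at this
  omega

end Cycle

section KConnected

variable {a b x : G.V}

lemma exists_ne_ne_of_three_le_card (hcard : 3 ≤ Fintype.card G.V) (a b : G.V) :
    ∃ x, x ≠ a ∧ x ≠ b := by
  obtain ⟨x, hx⟩ : (({a, b} : Finset G.V)ᶜ).Nonempty := by
    rw [← Finset.card_pos, Finset.card_compl]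
    have := Finset.card_le_two (a := a) (b := b)
    omega
  exact ⟨x, by simpa [not_or] using hx⟩

lemma KConnected.exists_walk_avoiding (h : G.KConnected 2) (ha : a ≠ x) (hb : b ≠ x) :
    ∃ w : Walk G a b, x ∉ w.support := by
  obtain ⟨w, hw⟩ := exists_walk_of_reachOutside (h.2 {x} (by simp) a b ha hb) ha
  exact ⟨w, fun hx => hw x hx rfl⟩

lemma kConnected_two_of_exists_walk_avoiding (hcard : 3 ≤ Fintype.card G.V)
    (h : ∀ x a b : G.V, a ≠ x → b ≠ x → ∃ w : Walk G a b, x ∉ w.support) : G.KConnected 2 := by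
  refine ⟨hcard, fun S hS a b ha hb => ?_⟩
  rcases (Set.ncard_le_one_iff_eq).mp (Nat.le_of_lt_succ hS) with rfl | ⟨x, rfl⟩
  · obtain ⟨x, hxa, hxb⟩ := exists_ne_ne_of_three_le_card hcard a b
    obtain ⟨w, -⟩ := h x a b hxa.symm hxb.symm
    exact reachOutside_of_walk w (by simp)
  · obtain ⟨w, hw⟩ := h x a b ha hb
    exact reachOutside_of_walk w fun v hv (hvx : v = x) => hw (hvx ▸ hv)

lemma KConnected.exists_isCycle_of_ends_eq (h : G.KConnected 2) {e : G.E}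
    (he : G.ends e = s(a, b)) :
    ∃ (c : G.V) (K : Walk G c c), K.IsCycle ∧ a ∈ K.support ∧ b ∈ K.support := by
  obtain ⟨c, hca, hcb⟩ := exists_ne_ne_of_three_le_card h.1 a b
  obtain ⟨w₁, hw₁⟩ := h.exists_walk_avoiding (x := a) (b := c) (ne_of_ends_eq he).symm hca
  obtain ⟨w₂, hw₂⟩ := h.exists_walk_avoiding (x := b) (b := a) hcb (ne_of_ends_eq he)
  obtain ⟨p, hp, -, hpe⟩ := (w₁.append w₂).exists_path_subset
  have hep : e ∉ p.edges := fun hep => by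
    rcases List.mem_append.mp (edges_append w₁ w₂ ▸ hpe hep) with h₁ | h₂
    exacts [hw₁ (mem_support_of_mem_edges h₁ (by simp [he])),
      hw₂ (mem_support_of_mem_edges h₂ (by simp [he]))]
  exact ⟨a, cons e he p, isCycle_cons he hp hep, by simp, by simp⟩

/-- A cycle through `x` and `b` reroutes through a new vertex `a` adjacent to `x`: follow an
`a`–`b` path avoiding `x` to its first vertex `y` on the cycle, and close up along the arc of
the cycle from `x` to `y` that contains `b`. -/
lemma KConnected.exists_isCycle_of_isCycle (h : G.KConnected 2) {e : G.E}
    (he : G.ends e = s(a, x)) {c : G.V} {K : Walk G c c} (hK : K.IsCycle) (hxK : x ∈ K.support)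
    (hbK : b ∈ K.support) (hxb : x ≠ b) (haK : a ∉ K.support) :
    ∃ (c : G.V) (K : Walk G c c), K.IsCycle ∧ a ∈ K.support ∧ b ∈ K.support := by
  have hax := ne_of_ends_eq he
  obtain ⟨R₀, hR₀⟩ := h.exists_walk_avoiding hax hxb.symm
  obtain ⟨R, hR, hRR₀, -⟩ := R₀.exists_path_subset
  obtain ⟨y, R₁, R₂, rfl, hyK, hfirst⟩ :=
    R.exists_eq_append_first (· ∈ K.support) ⟨b, R.end_mem_support, hbK⟩
  have hxR₁ : x ∉ R₁.support := fun hx =>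
    hR₀ (hRR₀ ((mem_support_append_iff _ _).mpr (Or.inl hx)))
  have hxy : x ≠ y := fun hxy => hxR₁ (hxy ▸ R₁.end_mem_support)
  obtain ⟨B, C, hB, hC, -, -, hBC, -⟩ := hK.exists_paths hxK hyK hxy
  obtain ⟨A, hA, hAK, hbA⟩ : ∃ A : Walk G x y, A.support.Nodup ∧
      (∀ v ∈ A.support, v ∈ K.support) ∧ b ∈ A.support := by
    rcases (hBC b).mp hbK with hbB | hbC
    exacts [⟨B, hB, fun v hv => (hBC v).mpr (Or.inl hv), hbB⟩,
      ⟨C, hC, fun v hv => (hBC v).mpr (Or.inr hv), hbC⟩]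
  have hpath : (A.append R₁.reverse).support.Nodup := by
    refine support_nodup_append hA (by simpa using support_nodup_of_append_left hR) ?_
    intro v hvA hvR
    exact hfirst v (by simpa using hvR) (hAK v hvA)
  have hep : e ∉ (A.append R₁.reverse).edges := fun hep => by
    rcases List.mem_append.mp (edges_append _ _ ▸ hep) with hA' | hR'
    · exact haK (hAK a (mem_support_of_mem_edges hA' (by simp [he])))
    · exact hxR₁ (mem_support_of_mem_edges (List.mem_reverse.mp (edges_reverse R₁ ▸ hR'))
        (by simp [he]))
  exact ⟨a, cons e he (A.append R₁.reverse), isCycle_cons he hpath hep, by simp,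
    List.mem_cons_of_mem _ ((mem_support_append_iff _ _).mpr (Or.inl hbA))⟩

lemma KConnected.exists_isCycle_of_walk (h : G.KConnected 2) (w : Walk G a b) (hab : a ≠ b) :
    ∃ (c : G.V) (K : Walk G c c), K.IsCycle ∧ a ∈ K.support ∧ b ∈ K.support := by
  induction w with
  | nil => exact absurd rfl hab
  | @cons a x b e he w ih =>
    by_cases hxb : x = b
    · subst hxb
      exact h.exists_isCycle_of_ends_eq he
    obtain ⟨c, K, hK, hxK, hbK⟩ := ih hxb
    by_cases haK : a ∈ K.support
    · exact ⟨c, K, hK, haK, hbK⟩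
    · exact h.exists_isCycle_of_isCycle he hK hxK hbK hxb haK

/-- Whitney's theorem. -/
theorem KConnected.exists_isCycle_mem_support (h : G.KConnected 2) (hab : a ≠ b) :
    ∃ (c : G.V) (K : Walk G c c), K.IsCycle ∧ a ∈ K.support ∧ b ∈ K.support := by
  obtain ⟨x, hxa, hxb⟩ := exists_ne_ne_of_three_le_card h.1 a b
  obtain ⟨w, -⟩ := h.exists_walk_avoiding hxa.symm hxb.symm
  exact h.exists_isCycle_of_walk w hab

end KConnected

/-- At `u` only two edges, to `v₁` and `v₂`, are kept, and an apex `Sum.inr ()` is joined to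
`T`: a cycle through `u` and the apex then consists of two disjoint paths of `G - u` from `v₁`,
`v₂` to `T`, closed up through `u` and the apex. -/
@[reducible] noncomputable def fanGraph (G : SGraph) (u v₁ v₂ : G.V) (hv₁ : v₁ ≠ u) (hv₂ : v₂ ≠ u)
    (T : Set G.V) : SGraph where
  V := G.V ⊕ Unit
  E := {e : G.E // u ∉ G.ends e} ⊕ (T ⊕ Bool)
  fintE := by classical infer_instance
  decE := by classical infer_instance
  ends
    | .inl e => (G.ends e.1).map Sum.inl
    | .inr (.inl t) => s(Sum.inr (), Sum.inl t.1)
    | .inr (.inr b) => s(Sum.inl u, Sum.inl (cond b v₁ v₂))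
  loopless := by
    rintro (e | t | b)
    · simpa [Sym2.isDiag_map Sum.inl_injective] using G.loopless e.1
    · simp
    · cases b <;> simp [hv₁.symm, hv₂.symm]
  sgn _ := 1

section fanGraph

variable {u v₁ v₂ : G.V} {hv₁ : v₁ ≠ u} {hv₂ : v₂ ≠ u} {T : Set G.V}

local notation "H" => G.fanGraph u v₁ v₂ hv₁ hv₂ T

lemma Walk.exists_fanGraph_walk {a b : G.V} (w : Walk G a b) (hu : u ∉ w.support) :
    ∃ w' : Walk (H) (Sum.inl a) (Sum.inl b), w'.support = w.support.map Sum.inl := by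
  induction w with
  | nil => exact ⟨nil, rfl⟩
  | @cons a a' b e he w ih =>
    simp only [support, List.mem_cons, not_or] at hu
    have hue : u ∉ G.ends e := by
      rw [he, Sym2.mem_iff]
      rintro (rfl | rfl)
      exacts [hu.1 rfl, hu.2 w.start_mem_support]
    obtain ⟨w', hw'⟩ := ih hu.2
    exact ⟨cons (G := H) (.inl ⟨e, hue⟩) (by simp [fanGraph, he]) w', by simp [hw']⟩

lemma fanGraph_exists_walk_to_inl (hv : v₁ ≠ v₂) (hu : u ∉ T)
    (hT : ∃ t₁ ∈ T, ∃ t₂ ∈ T, t₁ ≠ t₂) {x z : (H).V} (hz : z ≠ x) :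
    ∃ t, t ≠ u ∧ Sum.inl t ≠ x ∧ ∃ w : Walk (H) z (Sum.inl t), x ∉ w.support := by
  -- of `v₁`, `v₂` (and of two vertices of `T`) at most one is `x`
  have hpick : ∀ p q : G.V, p ≠ q → p ≠ u → q ≠ u →
      ∃ t, (t = p ∨ t = q) ∧ t ≠ u ∧ (Sum.inl t : (H).V) ≠ x := by
    intro p q hpq hp hq
    by_cases hpx : (Sum.inl p : (H).V) = x
    · exact ⟨q, Or.inr rfl, hq, fun hqx => hpq (Sum.inl_injective (hpx.trans hqx.symm))⟩
    · exact ⟨p, Or.inl rfl, hp, hpx⟩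
  have hstep : ∀ t e, (H).ends e = s(z, Sum.inl t) → t ≠ u → (Sum.inl t : (H).V) ≠ x →
      ∃ t, t ≠ u ∧ Sum.inl t ≠ x ∧ ∃ w : Walk (H) z (Sum.inl t), x ∉ w.support :=
    fun t e he htu htx => ⟨t, htu, htx, cons e he nil, by simp [hz.symm, htx.symm]⟩
  rcases z with v | ⟨⟩
  · by_cases hvu : v = u
    · subst hvu
      obtain ⟨t, rfl | rfl, htu, htx⟩ := hpick v₁ v₂ hv hv₁ hv₂
      exacts [hstep _ (.inr (.inr true)) rfl htu htx, hstep _ (.inr (.inr false)) rfl htu htx]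
    · exact ⟨v, hvu, hz, nil, by simpa using hz.symm⟩
  · obtain ⟨t₁, ht₁, t₂, ht₂, ht⟩ := hT
    obtain ⟨t, rfl | rfl, htu, htx⟩ :=
      hpick t₁ t₂ ht (ne_of_mem_of_not_mem ht₁ hu) (ne_of_mem_of_not_mem ht₂ hu)
    exacts [hstep _ (.inr (.inl ⟨t, ht₁⟩)) rfl htu htx,
      hstep _ (.inr (.inl ⟨t, ht₂⟩)) rfl htu htx]

theorem KConnected.kConnected_two_fanGraph (h3 : G.KConnected 3) (hv : v₁ ≠ v₂) (hu : u ∉ T)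
    (hT : ∃ t₁ ∈ T, ∃ t₂ ∈ T, t₁ ≠ t₂) : (H).KConnected 2 := by
  refine kConnected_two_of_exists_walk_avoiding ?_ fun x a b ha hb => ?_
  · have := h3.1
    change 3 ≤ Fintype.card (G.V ⊕ Unit)
    simp only [Fintype.card_sum, Fintype.card_unit]
    omega
  obtain ⟨ta, htau, htax, wa, hwa⟩ := fanGraph_exists_walk_to_inl hv hu hT ha
  obtain ⟨tb, htbu, htbx, wb, hwb⟩ := fanGraph_exists_walk_to_inl hv hu hT hb
  let S : Set G.V := insert u {v | Sum.inl v = x}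
  have hS : S.ncard < 3 := by
    show (insert u _ : Set G.V).ncard < 3
    have h1 : {v : G.V | Sum.inl v = x}.ncard ≤ 1 := Set.ncard_le_one_iff_subsingleton.mpr
      fun v hv w hw => Sum.inl_injective (hv.trans hw.symm)
    have := Set.ncard_insert_le u {v : G.V | Sum.inl v = x}
    omega
  have hta : ta ∉ S := by simp [S, htau, htax]
  obtain ⟨w, hw⟩ := exists_walk_of_reachOutside
    (h3.2 S hS ta tb hta (by simp [S, htbu, htbx])) hta
  obtain ⟨w', hw'⟩ := w.exists_fanGraph_walk (hv₁ := hv₁) (hv₂ := hv₂) (T := T)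
    fun hu => hw u hu (Set.mem_insert _ _)
  refine ⟨wa.append (w'.append wb.reverse), ?_⟩
  intro hx
  rcases (mem_support_append_iff _ _).mp hx with h | h
  · exact hwa h
  rcases (mem_support_append_iff _ _).mp h with h | h
  · rw [hw', List.mem_map] at h
    obtain ⟨v, hv, rfl⟩ := h
    exact hw v hv (Set.mem_insert_of_mem _ rfl)
  · rw [support_reverse, List.mem_reverse] at h
    exact hwb h

lemma fanGraph_exists_path_of_walk {z s : (H).V} (w : Walk (H) z s) (hs : s = Sum.inr ())
    (hw : w.support.Nodup) (huw : Sum.inl u ∉ w.support) {v : G.V} (hz : z = Sum.inl v) :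
    ∃ t ∈ T, ∃ p : Walk G v t, p.support.Nodup ∧ (∀ y ∈ p.support, y ∈ T → y = t) ∧
      ∀ y ∈ p.support, Sum.inl y ∈ w.support := by
  induction w generalizing v with
  | nil => cases hz.symm.trans hs
  | @cons z z' _ e he w ih =>
    subst hz
    by_cases hvT : v ∈ T
    · exact ⟨v, hvT, nil, by simp, by simp, by simp⟩
    simp only [support, List.nodup_cons, List.mem_cons, not_or] at hw huw
    rcases e with ⟨e, hue⟩ | t | b
    · obtain ⟨p, q, hpq⟩ := exists_ends_eq e
      obtain ⟨v', rfl, hv'⟩ : ∃ v', z' = Sum.inl v' ∧ G.ends e = s(v, v') := by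
        simp only [fanGraph, hpq, Sym2.map_mk, Sym2.eq_iff, Sum.inl.injEq] at he
        rcases he with ⟨rfl, rfl⟩ | ⟨rfl, rfl⟩
        exacts [⟨q, rfl, hpq⟩, ⟨p, rfl, hpq.trans Sym2.eq_swap⟩]
      obtain ⟨t, ht, p, hp, hpT, hpw⟩ := ih hs hw.2 huw.2 rfl
      refine ⟨t, ht, cons e hv' p, List.nodup_cons.mpr ⟨fun hv => hw.1 (hpw v hv), hp⟩, ?_, ?_⟩
      · intro y hy hyT
        rcases List.mem_cons.mp hy with rfl | hy
        exacts [absurd hyT hvT, hpT y hy hyT]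
      · intro y hy
        rcases List.mem_cons.mp hy with rfl | hy
        exacts [List.mem_cons_self, List.mem_cons_of_mem _ (hpw y hy)]
    · simp only [fanGraph, Sym2.eq_iff, reduceCtorEq, false_and, Sum.inl.injEq,
        false_or] at he
      exact absurd (he.2 ▸ t.2) hvT
    · simp only [fanGraph, Sym2.eq_iff, Sum.inl.injEq] at he
      rcases he with ⟨rfl, -⟩ | ⟨rfl, -⟩
      exacts [(huw.1 rfl).elim, (huw.2 w.start_mem_support).elim]

lemma fanGraph_exists_path (hu : u ∉ T) (B : Walk (H) (Sum.inl u) (Sum.inr ()))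
    (hB : B.support.Nodup) :
    ∃ b : Bool, Sum.inr (Sum.inr b) ∈ B.edges ∧ ∃ t ∈ T, ∃ p : Walk G (cond b v₁ v₂) t,
      p.support.Nodup ∧ (∀ y ∈ p.support, y ∈ T → y = t) ∧
      ∀ y ∈ p.support, y ≠ u ∧ Sum.inl y ∈ B.support := by
  match B, hB with
  | .cons e he B, hB =>
    simp only [support, List.nodup_cons] at hB
    rcases e with ⟨e, hue⟩ | t | b
    · refine absurd ?_ hue
      have := he ▸ Sym2.mem_mk_left (Sum.inl u : (H).V) _
      simpa [fanGraph] using this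
    · simp only [fanGraph, Sym2.eq_iff, reduceCtorEq, false_and, Sum.inl.injEq, false_or] at he
      exact absurd (he.2 ▸ t.2) hu
    · simp only [fanGraph, Sym2.congr_right] at he
      obtain ⟨t, ht, p, hp, hpT, hpB⟩ := fanGraph_exists_path_of_walk B rfl hB.2 hB.1 he.symm
      refine ⟨b, by simp, t, ht, p, hp, hpT, fun y hy => ⟨?_, ?_⟩⟩
      · exact fun hyu => hB.1 (hyu ▸ hpB y hy)
      · exact List.mem_cons_of_mem _ (hpB y hy)

end fanGraph

structure IsFan (u : G.V) (T : Set G.V) {v₁ v₂ t₁ t₂ : G.V} (p₁ : Walk G v₁ t₁)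
    (p₂ : Walk G v₂ t₂) : Prop where
  nodup₁ : p₁.support.Nodup
  nodup₂ : p₂.support.Nodup
  disjoint : ∀ v ∈ p₁.support, v ∉ p₂.support
  eq_of_mem₁ : ∀ v ∈ p₁.support, v ∈ T → v = t₁
  eq_of_mem₂ : ∀ v ∈ p₂.support, v ∈ T → v = t₂
  not_mem₁ : u ∉ p₁.support
  not_mem₂ : u ∉ p₂.support

namespace IsFan

variable {u : G.V} {T : Set G.V} {v₁ v₂ t₁ t₂ : G.V} {p₁ : Walk G v₁ t₁} {p₂ : Walk G v₂ t₂}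

lemma symm (hF : IsFan u T p₁ p₂) : IsFan u T p₂ p₁ :=
  ⟨hF.nodup₂, hF.nodup₁, fun v h₂ h₁ => hF.disjoint v h₁ h₂, hF.eq_of_mem₂, hF.eq_of_mem₁,
    hF.not_mem₂, hF.not_mem₁⟩

lemma ne (hF : IsFan u T p₁ p₂) : t₁ ≠ t₂ := fun h =>
  hF.disjoint t₁ p₁.end_mem_support (h ▸ p₂.end_mem_support)

lemma support_nodup_append (hF : IsFan u T p₁ p₂) {M : Walk G t₁ t₂} (hM : M.support.Nodup)
    (hMT : ∀ v ∈ M.support, v ∈ T) : (p₁.append (M.append p₂.reverse)).support.Nodup := by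
  refine Walk.support_nodup_append hF.nodup₁
    (Walk.support_nodup_append hM (by simpa using hF.nodup₂) ?_) ?_
  · intro v hvM hvp₂
    exact hF.eq_of_mem₂ v (by simpa using hvp₂) (hMT v hvM)
  · intro v hvp₁ hv
    rcases (mem_support_append_iff _ _).mp hv with hvM | hvp₂
    · exact hF.eq_of_mem₁ v hvp₁ (hMT v hvM)
    · exact absurd (by simpa using hvp₂) (hF.disjoint v hvp₁)

end IsFan

/-- A case of Menger's theorem, read off a cycle of the fan graph through `u` and the apex. -/
theorem KConnected.exists_isFan (h3 : G.KConnected 3) {u v₁ v₂ : G.V} (hv₁ : v₁ ≠ u)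
    (hv₂ : v₂ ≠ u) (hv : v₁ ≠ v₂) {T : Set G.V} (hu : u ∉ T)
    (hT : ∃ t₁ ∈ T, ∃ t₂ ∈ T, t₁ ≠ t₂) :
    ∃ t₁ ∈ T, ∃ t₂ ∈ T, ∃ (p₁ : Walk G v₁ t₁) (p₂ : Walk G v₂ t₂), IsFan u T p₁ p₂ := by
  obtain ⟨c, K, hK, huK, hstarK⟩ := (h3.kConnected_two_fanGraph (hv₁ := hv₁) (hv₂ := hv₂) hv hu
    hT).exists_isCycle_mem_support (a := Sum.inl u) (b := Sum.inr ()) Sum.inl_ne_inr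
  obtain ⟨B, C, hB, hC, hBC, hedges, -, -⟩ := hK.exists_paths huK hstarK Sum.inl_ne_inr
  obtain ⟨b₁, hb₁, t₁, ht₁, q₁, hq₁, hq₁T, hq₁B⟩ := fanGraph_exists_path hu B hB
  obtain ⟨b₂, hb₂, t₂, ht₂, q₂, hq₂, hq₂T, hq₂C⟩ := fanGraph_exists_path hu C hC
  have hb : b₁ ≠ b₂ := by
    rintro rfl
    exact hedges _ hb₁ hb₂
  have hF : IsFan u T q₁ q₂ := by
    refine ⟨hq₁, hq₂, fun y hy₁ hy₂ => ?_, hq₁T, hq₂T, fun h => (hq₁B u h).1 rfl,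
      fun h => (hq₂C u h).1 rfl⟩
    rcases hBC _ (hq₁B y hy₁).2 (hq₂C y hy₂).2 with h | h
    · exact (hq₁B y hy₁).1 (Sum.inl_injective h)
    · cases h
  cases b₁ <;> cases b₂
  · exact absurd rfl hb
  · exact ⟨t₂, ht₂, t₁, ht₁, q₂, q₁, hF.symm⟩
  · exact ⟨t₁, ht₁, t₂, ht₂, q₁, q₂, hF⟩
  · exact absurd rfl hb

lemma IsCycle.exists_mem_verts_ne {N : Set G.E} (hN : G.IsCycle N) :
    ∃ t₁ ∈ G.verts N, ∃ t₂ ∈ G.verts N, t₁ ≠ t₂ := by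
  obtain ⟨e, he⟩ := hN.1
  obtain ⟨a, b, hab⟩ := exists_ends_eq e
  exact ⟨a, ⟨e, he, by simp [hab]⟩, b, ⟨e, he, by simp [hab]⟩, ne_of_ends_eq hab⟩

lemma IsCycle.exists_arcs {N : Set G.E} (hN : G.IsCycle N) {t₁ t₂ : G.V}
    (ht₁ : t₁ ∈ G.verts N) (ht₂ : t₂ ∈ G.verts N) (ht : t₁ ≠ t₂) :
    ∃ M₁ M₂ : Walk G t₁ t₂, M₁.support.Nodup ∧ M₂.support.Nodup ∧
      (∀ v ∈ M₁.support, v ∈ G.verts N) ∧ (∀ v ∈ M₂.support, v ∈ G.verts N) ∧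
      M₁.sign * M₂.sign = G.signOf N := by
  obtain ⟨a, K, hK, rfl⟩ := hN.exists_walk
  have hverts : ∀ v, v ∈ G.verts {e | e ∈ K.edges} ↔ v ∈ K.support := fun v =>
    ⟨fun ⟨_, he, hv⟩ => mem_support_of_mem_edges he hv,
      exists_mem_edges_of_mem_support hK.edges_ne_nil⟩
  obtain ⟨B, C, hB, hC, -, -, hBC, hsign⟩ :=
    hK.exists_paths ((hverts t₁).mp ht₁) ((hverts t₂).mp ht₂) ht
  refine ⟨B, C, hB, hC, fun v hv => (hverts v).mpr ((hBC v).mpr (Or.inl hv)),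
    fun v hv => (hverts v).mpr ((hBC v).mpr (Or.inr hv)), ?_⟩
  rw [hsign, signOf_setOf_mem_edges hK.edges_nodup]

lemma exists_isCycle_of_path {u v₁ v₂ : G.V} {e₁ e₂ : G.E} (h₁ : G.ends e₁ = s(u, v₁))
    (h₂ : G.ends e₂ = s(u, v₂)) (hv : v₁ ≠ v₂) (P : Walk G v₁ v₂) (hP : P.support.Nodup)
    (hu : u ∉ P.support) :
    ∃ C, G.IsCycle C ∧ e₁ ∈ C ∧ e₂ ∈ C ∧ G.signOf C = G.sgn e₁ * P.sign * G.sgn e₂ := by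
  have h₂' : G.ends e₂ = s(v₂, u) := h₂.trans Sym2.eq_swap
  let Q := P.append (cons e₂ h₂' nil)
  have hQ : Q.support.Nodup := by
    refine support_nodup_append hP (by simp [(ne_of_ends_eq h₂).symm]) fun v hvP hv => ?_
    rcases List.mem_cons.mp hv with rfl | hv
    · rfl
    · exact absurd (List.mem_singleton.mp hv ▸ hvP) hu
  have he₁Q : e₁ ∉ Q.edges := by
    intro he₁
    rcases List.mem_append.mp (edges_append _ _ ▸ he₁) with he₁ | he₁
    · exact hu (mem_support_of_mem_edges he₁ (by simp [h₁]))
    · rw [edges, edges, List.mem_singleton] at he₁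
      rw [he₁, h₂, Sym2.congr_right] at h₁
      exact hv h₁.symm
  have hW := isCycle_cons h₁ hQ he₁Q
  refine ⟨_, hW.isCycle_setOf, by simp, by simp [Q], ?_⟩
  rw [signOf_setOf_mem_edges hW.edges_nodup]
  simp [Q, mul_assoc]

lemma IsFan.exists_isCycle {u v₁ v₂ t₁ t₂ : G.V} {T : Set G.V} {p₁ : Walk G v₁ t₁}
    {p₂ : Walk G v₂ t₂} (hF : IsFan u T p₁ p₂) (hu : u ∉ T) {e₁ e₂ : G.E}
    (h₁ : G.ends e₁ = s(u, v₁)) (h₂ : G.ends e₂ = s(u, v₂)) (hv : v₁ ≠ v₂)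
    {M : Walk G t₁ t₂} (hM : M.support.Nodup) (hMT : ∀ v ∈ M.support, v ∈ T) :
    ∃ C, G.IsCycle C ∧ (e₁ ∈ C ∧ e₂ ∈ C) ∧
      G.signOf C = G.sgn e₁ * p₁.sign * M.sign * p₂.sign * G.sgn e₂ := by
  have hu : u ∉ (p₁.append (M.append p₂.reverse)).support := by
    simp only [mem_support_append_iff, support_reverse, List.mem_reverse, not_or]
    exact ⟨hF.not_mem₁, fun h => hu (hMT u h), hF.not_mem₂⟩
  obtain ⟨C, hC, he₁, he₂, hCsign⟩ :=
    exists_isCycle_of_path h₁ h₂ hv _ (hF.support_nodup_append hM hMT) hu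
  exact ⟨C, hC, ⟨he₁, he₂⟩, by simp [hCsign, mul_assoc]⟩

lemma untied_of_signOf_mul_signOf_eq_neg_one {e₁ e₂ : G.E} {C₁ C₂ : Set G.E} (hC₁ : G.IsCycle C₁)
    (hC₂ : G.IsCycle C₂) (he₁ : e₁ ∈ C₁ ∧ e₂ ∈ C₁) (he₂ : e₁ ∈ C₂ ∧ e₂ ∈ C₂)
    (hsign : G.signOf C₁ * G.signOf C₂ = -1) : G.Untied e₁ e₂ := by
  rcases Int.units_eq_one_or (G.signOf C₁) with h | h
  · rw [h, one_mul] at hsign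
    exact ⟨⟨C₁, hC₁, he₁.1, he₁.2, h⟩, ⟨C₂, hC₂, he₂.1, he₂.2, hsign⟩⟩
  · rw [h, neg_mul, one_mul, neg_inj] at hsign
    exact ⟨⟨C₂, hC₂, he₂.1, he₂.2, hsign⟩, ⟨C₁, hC₁, he₁.1, he₁.2, h⟩⟩

end SGraph

/-- If `e₁ = uv₁` and `e₂ = uv₂` share the vertex `u` in a 3-connected signed graph
and `G - u` is unbalanced, then `e₁` and `e₂` are untied. -/
theorem stmt_17 (G : SGraph) (h3 : G.KConnected 3)
    (u v₁ v₂ : G.V) (hv : v₁ ≠ v₂) (e₁ e₂ : G.E)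
    (h₁ : G.ends e₁ = s(u, v₁)) (h₂ : G.ends e₂ = s(u, v₂))
    (hub : ∃ C, G.IsCycle C ∧ G.signOf C = -1 ∧ u ∉ G.verts C) :
    G.Untied e₁ e₂ := by
  obtain ⟨N, hN, hNsign, huN⟩ := hub
  obtain ⟨t₁, ht₁, t₂, ht₂, p₁, p₂, hF⟩ := h3.exists_isFan (SGraph.ne_of_ends_eq h₁).symm
    (SGraph.ne_of_ends_eq h₂).symm hv huN hN.exists_mem_verts_ne
  obtain ⟨M₁, M₂, hM₁, hM₂, hM₁N, hM₂N, hsign⟩ := hN.exists_arcs ht₁ ht₂ hF.ne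
  obtain ⟨C₁, hC₁, he₁, hC₁sign⟩ := hF.exists_isCycle huN h₁ h₂ hv hM₁ hM₁N
  obtain ⟨C₂, hC₂, he₂, hC₂sign⟩ := hF.exists_isCycle huN h₁ h₂ hv hM₂ hM₂N
  refine SGraph.untied_of_signOf_mul_signOf_eq_neg_one hC₁ hC₂ he₁ he₂ ?_
  rw [hC₁sign, hC₂sign, ← hNsign, ← hsign]
  calc _ = (G.sgn e₁ * G.sgn e₁) * (p₁.sign * p₁.sign) * (p₂.sign * p₂.sign) *
        (G.sgn e₂ * G.sgn e₂) * (M₁.sign * M₂.sign) := by ac_rfl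
    _ = _ := by simp only [Int.units_mul_self, one_mul]
end

section
/- Let G be a signed graph containing a negative cycle C, and suppose there exist a vertex y ∉ V(C) and two paths P₁, P₂ from y to distinct vertices x₁, x₂ of C with V(P₁) ∩ V(P₂) = {y} and internally disjoint from V(C). Then the union C ∪ P₁ ∪ P₂, viewed with edges e₁ ⊆ P₁ and e₂ ⊆ P₂, yields a hat-minor of G; in particular, there exist cycles of both signs through any fixed edge of P₁ and any fixed edge of P₂. -/
namespace SGraph

/-- `H` is a minor of `G` with edge correspondence `ψ`: there are disjoint nonempty
branch sets `φ a`, each connected using edges that are positive after the switching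
`sw`, and each edge `h` of `H` corresponds to an edge `ψ h` of `G` joining the
appropriate branch sets, with the sign of `h` equal to the switched sign of `ψ h`. -/
def IsSignedMinor (H G : SGraph) (ψ : H.E → G.E) : Prop :=
  Function.Injective ψ ∧
  ∃ (φ : H.V → Set G.V) (sw : G.V → ℤˣ),
    (∀ a, (φ a).Nonempty) ∧
    (∀ a b, a ≠ b → Disjoint (φ a) (φ b)) ∧
    (∀ a, ∀ x ∈ φ a, ∀ y ∈ φ a,
      Relation.ReflTransGen (fun p q => p ∈ φ a ∧ q ∈ φ a ∧
        ∃ e, G.ends e = s(p, q) ∧ sw p * sw q * G.sgn e = 1) x y) ∧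
    (∀ h : H.E, ∀ a b : H.V, H.ends h = s(a, b) →
      ∃ u ∈ φ a, ∃ v ∈ φ b, G.ends (ψ h) = s(u, v) ∧
        H.sgn h = sw u * sw v * G.sgn (ψ h))

end SGraph

namespace SGraph

/-- `G` is a hat: a negative 2-cycle `C` on `x₁, x₂` plus a vertex `y` and
edges `e₁ = x₁y`, `e₂ = x₂y`. -/
def IsHat (G : SGraph) (C : Set G.E) (e₁ e₂ : G.E) : Prop :=
  ∃ (x₁ x₂ y : G.V) (f₁ f₂ : G.E),
    ([x₁, x₂, y] : List G.V).Nodup ∧ (∀ v : G.V, v ∈ [x₁, x₂, y]) ∧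
    ([f₁, f₂, e₁, e₂] : List G.E).Nodup ∧ (∀ e : G.E, e ∈ [f₁, f₂, e₁, e₂]) ∧
    G.ends f₁ = s(x₁, x₂) ∧ G.ends f₂ = s(x₁, x₂) ∧ G.sgn f₁ * G.sgn f₂ = -1 ∧
    G.ends e₁ = s(x₁, y) ∧ G.ends e₂ = s(x₂, y) ∧
    C = {f₁, f₂}

/-- `G` is a target: a negative 4-cycle `C` on `x₁x₂x₃x₄` with chords
`e₁ = x₁x₃` and `e₂ = x₂x₄`. -/
def IsTarget (G : SGraph) (C : Set G.E) (e₁ e₂ : G.E) : Prop :=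
  ∃ (x₁ x₂ x₃ x₄ : G.V) (c₁ c₂ c₃ c₄ : G.E),
    ([x₁, x₂, x₃, x₄] : List G.V).Nodup ∧ (∀ v : G.V, v ∈ [x₁, x₂, x₃, x₄]) ∧
    ([c₁, c₂, c₃, c₄, e₁, e₂] : List G.E).Nodup ∧
    (∀ e : G.E, e ∈ [c₁, c₂, c₃, c₄, e₁, e₂]) ∧
    G.ends c₁ = s(x₁, x₂) ∧ G.ends c₂ = s(x₂, x₃) ∧
    G.ends c₃ = s(x₃, x₄) ∧ G.ends c₄ = s(x₄, x₁) ∧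
    G.sgn c₁ * G.sgn c₂ * G.sgn c₃ * G.sgn c₄ = -1 ∧
    G.ends e₁ = s(x₁, x₃) ∧ G.ends e₂ = s(x₂, x₄) ∧
    C = {c₁, c₂, c₃, c₄}

/-- `G` is a hedgehog: a negative triangle `C` on `x₁, x₂, x₃` plus vertices
`y₁, y₂` joined to all the `xⱼ`, with `e₁ = x₁y₁` and `e₂ = x₂y₂`. -/
def IsHedgehog (G : SGraph) (C : Set G.E) (e₁ e₂ : G.E) : Prop :=
  ∃ (x₁ x₂ x₃ y₁ y₂ : G.V) (c₁ c₂ c₃ a₁₂ a₁₃ a₂₁ a₂₃ : G.E),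
    ([x₁, x₂, x₃, y₁, y₂] : List G.V).Nodup ∧ (∀ v : G.V, v ∈ [x₁, x₂, x₃, y₁, y₂]) ∧
    ([c₁, c₂, c₃, e₁, a₁₂, a₁₃, a₂₁, a₂₃, e₂] : List G.E).Nodup ∧
    (∀ e : G.E, e ∈ [c₁, c₂, c₃, e₁, a₁₂, a₁₃, a₂₁, a₂₃, e₂]) ∧
    G.ends c₁ = s(x₁, x₂) ∧ G.ends c₂ = s(x₂, x₃) ∧ G.ends c₃ = s(x₃, x₁) ∧
    G.sgn c₁ * G.sgn c₂ * G.sgn c₃ = -1 ∧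
    G.ends e₁ = s(x₁, y₁) ∧ G.ends a₁₂ = s(x₂, y₁) ∧ G.ends a₁₃ = s(x₃, y₁) ∧
    G.ends a₂₁ = s(x₁, y₂) ∧ G.ends e₂ = s(x₂, y₂) ∧ G.ends a₂₃ = s(x₃, y₂) ∧
    C = {c₁, c₂, c₃}

end SGraph

namespace SGraph

open Classical in
lemma exists_other (G : SGraph) (e : G.E) (x : G.V) (hx : x ∈ G.ends e) :
    ∃ y, y ≠ x ∧ G.ends e = s(x, y) := by
  obtain ⟨y, hy⟩ := Sym2.mem_iff_exists.1 hx
  refine ⟨y, ?_, hy⟩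
  rintro rfl
  exact G.loopless e (by rw [hy]; exact Sym2.mk_isDiag_iff.2 rfl)

variable {G : SGraph}

lemma deg_eq_zero_iff {S : Set G.E} {x : G.V} : G.deg S x = 0 ↔ x ∉ G.verts S := by
  rw [deg, Set.ncard_eq_zero (Set.toFinite _)]
  constructor
  · intro h ⟨e, he, hx⟩
    exact absurd (Set.eq_empty_iff_forall_notMem.1 h e ⟨he, hx⟩) (by simp)
  · intro h
    ext e; simp only [Set.mem_setOf_eq, Set.mem_empty_iff_false, iff_false]
    rintro ⟨he, hx⟩; exact h ⟨e, he, hx⟩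

lemma deg_pos_of_mem {S : Set G.E} {x : G.V} {e : G.E} (he : e ∈ S) (hx : x ∈ G.ends e) :
    0 < G.deg S x := by
  rcases Nat.eq_zero_or_pos (G.deg S x) with h | h
  · exact absurd (deg_eq_zero_iff.1 h) (by simp [verts]; exact ⟨e, he, hx⟩)
  · exact h

lemma deg_diff_singleton_mem {S : Set G.E} {f : G.E} {x : G.V} (hf : f ∈ S)
    (hx : x ∈ G.ends f) : G.deg (S \ {f}) x + 1 = G.deg S x := by
  have h1 : {e ∈ S \ {f} | x ∈ G.ends e} = {e ∈ S | x ∈ G.ends e} \ {f} := by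
    ext e; simp only [Set.mem_diff, Set.mem_setOf_eq, Set.mem_singleton_iff]; tauto
  rw [deg, deg, h1]
  exact Set.ncard_diff_singleton_add_one ⟨hf, hx⟩ (Set.toFinite _)

lemma deg_diff_singleton_not_mem {S : Set G.E} {f : G.E} {x : G.V}
    (hx : x ∉ G.ends f) : G.deg (S \ {f}) x = G.deg S x := by
  have h1 : {e ∈ S \ {f} | x ∈ G.ends e} = {e ∈ S | x ∈ G.ends e} := by
    ext e; simp only [Set.mem_diff, Set.mem_setOf_eq, Set.mem_singleton_iff]
    constructor
    · rintro ⟨⟨he, -⟩, hxe⟩; exact ⟨he, hxe⟩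
    · rintro ⟨he, hxe⟩; exact ⟨⟨he, fun h => hx (h ▸ hxe)⟩, hxe⟩
  rw [deg, deg, h1]

lemma deg_eq_one {S : Set G.E} {x : G.V} (h : G.deg S x = 1) :
    ∃ e, e ∈ S ∧ x ∈ G.ends e ∧ ∀ f ∈ S, x ∈ G.ends f → f = e := by
  obtain ⟨e, he⟩ := Set.ncard_eq_one.1 h
  have h1 : e ∈ {e ∈ S | x ∈ G.ends e} := he ▸ rfl
  exact ⟨e, h1.1, h1.2, fun f hf hxf => by
    have : f ∈ {e ∈ S | x ∈ G.ends e} := ⟨hf, hxf⟩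
    rwa [he, Set.mem_singleton_iff] at this⟩

lemma rtg_symm {α : Type*} {r : α → α → Prop} (hr : ∀ x y, r x y → r y x) {a b : α}
    (h : Relation.ReflTransGen r a b) : Relation.ReflTransGen r b a := by
  induction h with
  | refl => exact .refl
  | tail _ hbc ih => exact .trans (.single (hr _ _ hbc)) ih

/-- Indexed walks. -/
def IsWalk (G : SGraph) (n : ℕ) (v : ℕ → G.V) (e : ℕ → G.E) : Prop :=
  ∀ t < n, G.ends (e t) = s(v t, v (t+1))

/-- Edge set of an indexed family. -/
def eset (G : SGraph) (n : ℕ) (e : ℕ → G.E) : Set G.E := {f | ∃ t < n, e t = f}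

lemma mem_eset {n : ℕ} {e : ℕ → G.E} {t : ℕ} (ht : t < n) : e t ∈ G.eset n e := ⟨t, ht, rfl⟩

lemma walk_vert_mem_ends {n v e} (hw : G.IsWalk n v e) {t : ℕ} (ht : t < n) :
    v t ∈ G.ends (e t) ∧ v (t+1) ∈ G.ends (e t) := by
  rw [hw t ht]; simp

lemma walk_vert_mem_pverts {n v e} (hw : G.IsWalk n v e) {t : ℕ} (ht : t ≤ n) :
    v t ∈ G.pverts (G.eset n e) (v 0) (v n) := by
  rcases lt_or_eq_of_le ht with ht | rfl
  · exact Or.inl ⟨e t, mem_eset ht, (walk_vert_mem_ends hw ht).1⟩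
  · exact Or.inr (by simp [Set.mem_insert_iff])

lemma verts_eset_subset {n v e} (hw : G.IsWalk n v e) {x : G.V}
    (hx : x ∈ G.verts (G.eset n e)) : ∃ t ≤ n, v t = x := by
  obtain ⟨f, ⟨t, ht, rfl⟩, hxf⟩ := hx
  rw [hw t ht] at hxf
  rcases Sym2.mem_iff.1 hxf with h | h
  · exact ⟨t, ht.le, h.symm⟩
  · exact ⟨t+1, ht, h.symm⟩

end SGraph
namespace SGraph

variable {G : SGraph}

lemma walk_einj {n v e} (hw : G.IsWalk n v e)
    (hv : ∀ s ≤ n, ∀ t ≤ n, v s = v t → s = t) :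
    ∀ s < n, ∀ t < n, e s = e t → s = t := by
  intro s hs t ht hef
  have h1 := hw s hs
  have h2 := hw t ht
  rw [hef, h2, Sym2.eq_iff] at h1
  rcases h1 with ⟨ha, -⟩ | ⟨ha, hb⟩
  · exact (hv t ht.le s hs.le ha).symm
  · have h3 := hv t ht.le (s+1) hs ha
    have h4 := hv (t+1) ht s hs.le hb
    omega

lemma deg_eset_eq_ncard_index {n : ℕ} {e : ℕ → G.E}
    (hei : ∀ s < n, ∀ t < n, e s = e t → s = t) (x : G.V) :
    G.deg (G.eset n e) x = {t | t < n ∧ x ∈ G.ends (e t)}.ncard := by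
  rw [deg]
  have himg : {f ∈ G.eset n e | x ∈ G.ends f} = e '' {t | t < n ∧ x ∈ G.ends (e t)} := by
    ext f
    simp only [Set.mem_setOf_eq, Set.mem_image, eset]
    constructor
    · rintro ⟨⟨t, ht, rfl⟩, hx⟩; exact ⟨t, ⟨ht, hx⟩, rfl⟩
    · rintro ⟨t, ⟨ht, hx⟩, rfl⟩; exact ⟨⟨t, ht, rfl⟩, hx⟩
  rw [himg]
  exact Set.ncard_image_of_injOn (fun s hs t ht hst => hei s hs.1 t ht.1 hst)

lemma sym2_mem_mk {a b x : G.V} : x ∈ s(a, b) ↔ x = a ∨ x = b := Sym2.mem_iff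

/-- Degrees in an open walk with injective vertices. -/
lemma walk_deg {n v e} (hw : G.IsWalk n v e) (hn : 1 ≤ n)
    (hv : ∀ s ≤ n, ∀ t ≤ n, v s = v t → s = t) :
    (∀ s ≤ n, G.deg (G.eset n e) (v s) = if s = 0 ∨ s = n then 1 else 2) ∧
    (∀ x, (∀ t ≤ n, v t ≠ x) → G.deg (G.eset n e) x = 0) := by
  have hei := walk_einj hw hv
  constructor
  · intro s hs
    rw [deg_eset_eq_ncard_index hei]
    have hset : {t | t < n ∧ v s ∈ G.ends (e t)} =
        {t | t < n ∧ (t = s ∨ t + 1 = s)} := by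
      ext t
      simp only [Set.mem_setOf_eq, and_congr_right_iff]
      intro ht
      rw [hw t ht, sym2_mem_mk]
      constructor
      · rintro (h | h)
        · exact Or.inl (hv s hs t ht.le h).symm
        · exact Or.inr (hv s hs (t+1) ht h).symm
      · rintro (rfl | rfl) <;> simp
    rw [hset]
    rcases eq_or_ne s 0 with rfl | hs0
    · have : {t | t < n ∧ (t = 0 ∨ t + 1 = 0)} = {0} := by ext t; simp; omega
      rw [this, if_pos (Or.inl rfl), Set.ncard_singleton]
    rcases eq_or_ne s n with rfl | hsn
    · have : {t | t < s ∧ (t = s ∨ t + 1 = s)} = {s - 1} := by ext t; simp; omega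
      rw [this, if_pos (Or.inr rfl), Set.ncard_singleton]
    · have : {t | t < n ∧ (t = s ∨ t + 1 = s)} = {s - 1, s} := by ext t; simp; omega
      rw [this, if_neg (by tauto), Set.ncard_pair (by omega)]
  · intro x hx
    rw [deg_eset_eq_ncard_index hei]
    have : {t | t < n ∧ x ∈ G.ends (e t)} = ∅ := by
      ext t
      simp only [Set.mem_setOf_eq, Set.mem_empty_iff_false, iff_false, not_and]
      intro ht hmem
      rw [hw t ht, sym2_mem_mk] at hmem
      rcases hmem with h | h
      · exact hx t ht.le h.symm
      · exact hx (t+1) ht h.symm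
    rw [this, Set.ncard_empty]

/-- Degrees in a closed walk with injective vertices (except endpoints) and injective edges. -/
lemma walk_deg_closed {n v e} (hw : G.IsWalk n v e) (hn : 2 ≤ n) (hclosed : v n = v 0)
    (hv : ∀ s < n, ∀ t < n, v s = v t → s = t)
    (hei : ∀ s < n, ∀ t < n, e s = e t → s = t) :
    (∀ s < n, G.deg (G.eset n e) (v s) = 2) ∧
    (∀ x, (∀ t < n, v t ≠ x) → G.deg (G.eset n e) x = 0) := by
  constructor
  · intro s hs
    rw [deg_eset_eq_ncard_index hei]
    have hset : {t | t < n ∧ v s ∈ G.ends (e t)} =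
        {t | t < n ∧ (t = s ∨ (t + 1 = s ∨ (t + 1 = n ∧ s = 0)))} := by
      ext t
      simp only [Set.mem_setOf_eq, and_congr_right_iff]
      intro ht
      rw [hw t ht, sym2_mem_mk]
      constructor
      · rintro (h | h)
        · exact Or.inl (hv s hs t ht h).symm
        · rcases eq_or_ne (t+1) n with h1 | h1
          · right; right
            refine ⟨h1, hv s hs 0 (by omega) (by rw [h, h1, hclosed])⟩
          · right; left
            exact (hv s hs (t+1) (by omega) h).symm
      · rintro (rfl | rfl | ⟨h1, rfl⟩)
        · exact Or.inl rfl
        · exact Or.inr rfl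
        · exact Or.inr (by rw [h1]; exact hclosed.symm)
    rw [hset]
    rcases eq_or_ne s 0 with rfl | hs0
    · have : {t | t < n ∧ (t = 0 ∨ (t + 1 = 0 ∨ (t + 1 = n ∧ (0:ℕ) = 0)))} = {0, n-1} := by
        ext t; simp; omega
      rw [this, Set.ncard_pair (by omega)]
    · have : {t | t < n ∧ (t = s ∨ (t + 1 = s ∨ (t + 1 = n ∧ s = 0)))} = {s - 1, s} := by
        ext t; simp only [Set.mem_setOf_eq, Set.mem_insert_iff, Set.mem_singleton_iff]; omega
      rw [this, Set.ncard_pair (by omega)]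
  · intro x hx
    rw [deg_eset_eq_ncard_index hei]
    have : {t | t < n ∧ x ∈ G.ends (e t)} = ∅ := by
      ext t
      simp only [Set.mem_setOf_eq, Set.mem_empty_iff_false, iff_false, not_and]
      intro ht hmem
      rw [hw t ht, sym2_mem_mk] at hmem
      rcases hmem with h | h
      · exact hx t ht h.symm
      · rcases eq_or_ne (t+1) n with h1 | h1
        · exact hx 0 (by omega) (by rw [← hclosed, ← h1]; exact h.symm)
        · exact hx (t+1) (by omega) h.symm
    rw [this, Set.ncard_empty]

/-- A walk's edge set is connected. -/
lemma walk_conn {n v e} (hw : G.IsWalk n v e) : G.conn (G.eset n e) := by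
  have key : ∀ t < n, Relation.ReflTransGen
      (fun a b => a ∈ G.eset n e ∧ b ∈ G.eset n e ∧ ∃ x, x ∈ G.ends a ∧ x ∈ G.ends b)
      (e 0) (e t) := by
    intro t ht
    induction t with
    | zero => exact .refl
    | succ k ih =>
      refine .tail (ih (by omega)) ⟨mem_eset (by omega), mem_eset ht, v (k+1), ?_, ?_⟩
      · rw [hw k (by omega)]; simp
      · rw [hw (k+1) ht]; simp
  rintro f ⟨s, hs, rfl⟩ g ⟨t, ht, rfl⟩
  exact .trans (rtg_symm (fun a b ⟨h1, h2, x, h3, h4⟩ => ⟨h2, h1, x, h4, h3⟩) (key s hs)) (key t ht)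

end SGraph
namespace SGraph

variable {G : SGraph}

lemma signOf_union {S T : Set G.E} (h : Disjoint S T) :
    G.signOf (S ∪ T) = G.signOf S * G.signOf T :=
  finprod_mem_union h (Set.toFinite S) (Set.toFinite T)

lemma signOf_eset {n : ℕ} {e : ℕ → G.E} (hei : ∀ s < n, ∀ t < n, e s = e t → s = t) :
    G.signOf (G.eset n e) = ∏ t ∈ Finset.range n, G.sgn (e t) := by
  have h1 : G.eset n e = e '' Set.Iio n := by
    ext f; simp [eset, Set.mem_image, Set.mem_Iio]
  rw [signOf, h1, ← Finset.coe_range, ← Finset.coe_image, finprod_mem_coe_finset]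
  rw [Finset.prod_image]
  intro s hs t ht h
  exact hei s (by simpa using hs) t (by simpa using ht) h

lemma isPath_of_walk {n v e} (hw : G.IsWalk n v e) (hn : 1 ≤ n)
    (hv : ∀ s ≤ n, ∀ t ≤ n, v s = v t → s = t) :
    G.IsPath (G.eset n e) (v 0) (v n) := by
  obtain ⟨hdeg, hdeg0⟩ := walk_deg hw hn hv
  right
  refine ⟨fun h => by have := hv 0 (by omega) n le_rfl h; omega,
    ⟨e 0, mem_eset hn⟩, ?_, ?_, ?_, walk_conn hw⟩
  · have := hdeg 0 (by omega); simpa using this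
  · have := hdeg n le_rfl; simpa using this
  · intro x hx0 hxn
    by_cases hex : ∃ s ≤ n, v s = x
    · obtain ⟨s, hs, rfl⟩ := hex
      have hs0 : s ≠ 0 := fun h => hx0 (by rw [h])
      have hsn : s ≠ n := fun h => hxn (by rw [h])
      right; have := hdeg s hs; simpa [hs0, hsn] using this
    · push_neg at hex
      left; exact hdeg0 x fun t ht h => hex t ht h

lemma isCycle_of_walk {n v e} (hw : G.IsWalk n v e) (hn : 2 ≤ n) (hclosed : v n = v 0)
    (hv : ∀ s < n, ∀ t < n, v s = v t → s = t)
    (hei : ∀ s < n, ∀ t < n, e s = e t → s = t) :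
    G.IsCycle (G.eset n e) := by
  obtain ⟨hdeg, hdeg0⟩ := walk_deg_closed hw hn hclosed hv hei
  refine ⟨⟨e 0, mem_eset (by omega)⟩, ?_, walk_conn hw⟩
  intro x
  by_cases hex : ∃ s < n, v s = x
  · obtain ⟨s, hs, rfl⟩ := hex
    exact Or.inr (hdeg s hs)
  · push_neg at hex
    exact Or.inl (hdeg0 x fun t ht h => hex t ht h)

lemma deg_insert {S : Set G.E} {f : G.E} (hf : f ∉ S) (x : G.V) :
    G.deg (insert f S) x = G.deg S x + if x ∈ G.ends f then 1 else 0 := by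
  by_cases hx : x ∈ G.ends f
  · rw [if_pos hx]
    have : {e ∈ insert f S | x ∈ G.ends e} = insert f {e ∈ S | x ∈ G.ends e} := by
      ext g; simp only [Set.mem_insert_iff, Set.mem_setOf_eq]
      constructor
      · rintro ⟨rfl | hg, hxg⟩; exacts [Or.inl rfl, Or.inr ⟨hg, hxg⟩]
      · rintro (rfl | ⟨hg, hxg⟩); exacts [⟨Or.inl rfl, hx⟩, ⟨Or.inr hg, hxg⟩]
    rw [deg, this, Set.ncard_insert_of_notMem (fun h => hf h.1) (Set.toFinite _)]; rfl
  · rw [if_neg hx]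
    have : {e ∈ insert f S | x ∈ G.ends e} = {e ∈ S | x ∈ G.ends e} := by
      ext g; simp only [Set.mem_insert_iff, Set.mem_setOf_eq]
      constructor
      · rintro ⟨rfl | hg, hxg⟩; exacts [absurd hxg hx, ⟨hg, hxg⟩]
      · rintro ⟨hg, hxg⟩; exact ⟨Or.inr hg, hxg⟩
    rw [deg, this, Nat.add_zero]; rfl

lemma sym2_rep {α : Type*} (z : Sym2 α) : ∃ a b, z = s(a, b) := by
  induction z using Sym2.ind with
  | _ x y => exact ⟨x, y, rfl⟩

lemma card_ends (f : G.E) : {x | x ∈ G.ends f}.ncard = 2 := by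
  obtain ⟨a, b, hab⟩ := sym2_rep (G.ends f)
  have hne : a ≠ b := fun h => G.loopless f (by rw [hab, h]; exact Sym2.mk_isDiag_iff.2 rfl)
  have : {x | x ∈ G.ends f} = {a, b} := by
    ext x; rw [hab]; simp [Sym2.mem_iff]
  rw [this, Set.ncard_pair hne]

lemma sum_ite_ends (f : G.E) : ∑ x : G.V, (if x ∈ G.ends f then 1 else 0) = 2 := by
  classical
  have h1 : ∑ x : G.V, (if x ∈ G.ends f then 1 else 0) = {x | x ∈ G.ends f}.ncard := by
    rw [Set.ncard_eq_toFinset_card', Set.toFinset_setOf, Finset.card_filter]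
  rw [h1, card_ends]

lemma handshake_finset (T : Finset G.E) : ∑ x : G.V, G.deg (↑T) x = 2 * T.card := by
  classical
  induction T using Finset.induction_on with
  | empty => simp [deg]
  | @insert f T' hf ih =>
    have hins : ((insert f T' : Finset G.E) : Set G.E) = insert f ↑T' := by simp
    rw [hins]
    rw [Finset.sum_congr rfl (fun x _ => deg_insert (by simpa using hf) x),
      Finset.sum_add_distrib, ih, sum_ite_ends, Finset.card_insert_of_notMem hf]
    ring

lemma handshake (S : Set G.E) : ∑ x : G.V, G.deg S x = 2 * S.ncard := by
  have hfin := Set.toFinite S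
  have h := handshake_finset hfin.toFinset
  rwa [Set.Finite.coe_toFinset, ← Set.ncard_eq_toFinset_card] at h

end SGraph
namespace SGraph

variable {G : SGraph}

/-- Removing an edge preserves connectivity if all remaining edges touching the removed
edge's endpoints are mutually linked. -/
lemma conn_diff {S : Set G.E} {e₀ : G.E} (hconn : G.conn S) {a b : G.V}
    (hab : G.ends e₀ = s(a, b))
    (hgate : ∀ f ∈ S \ {e₀}, ∀ g ∈ S \ {e₀},
      (a ∈ G.ends f ∨ b ∈ G.ends f) → (a ∈ G.ends g ∨ b ∈ G.ends g) →
      Relation.ReflTransGen (fun p q => p ∈ S \ {e₀} ∧ q ∈ S \ {e₀} ∧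
        ∃ x, x ∈ G.ends p ∧ x ∈ G.ends q) f g) :
    G.conn (S \ {e₀}) := by
  set S' := S \ {e₀} with hS'
  set r' : G.E → G.E → Prop := fun p q => p ∈ S' ∧ q ∈ S' ∧
    ∃ x, x ∈ G.ends p ∧ x ∈ G.ends q with hr'
  have key : ∀ f, f ∈ S' → ∀ c, Relation.ReflTransGen
      (fun p q => p ∈ S ∧ q ∈ S ∧ ∃ x, x ∈ G.ends p ∧ x ∈ G.ends q) f c →
      (c ∈ S' → Relation.ReflTransGen r' f c) ∧
      (c = e₀ → ∃ d ∈ S', (a ∈ G.ends d ∨ b ∈ G.ends d) ∧ Relation.ReflTransGen r' f d) := by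
    intro f hf c hchain
    induction hchain with
    | refl =>
      refine ⟨fun _ => .refl, fun hc => absurd hc ?_⟩
      rintro rfl; exact hf.2 rfl
    | @tail c g hfc hstep ih =>
      constructor
      · intro hg
        by_cases hc : c = e₀
        · obtain ⟨d, hd, hdgate, hfd⟩ := ih.2 hc
          obtain ⟨x, hxc, hxg⟩ := hstep.2.2
          rw [hc, hab] at hxc
          have hggate : a ∈ G.ends g ∨ b ∈ G.ends g := by
            rcases Sym2.mem_iff.1 hxc with rfl | rfl
            exacts [Or.inl hxg, Or.inr hxg]
          exact hfd.trans (hgate d hd g hg hdgate hggate)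
        · have hcS' : c ∈ S' := ⟨hstep.1, hc⟩
          exact (ih.1 hcS').tail ⟨hcS', hg, hstep.2.2⟩
      · intro hge
        by_cases hc : c = e₀
        · exact ih.2 hc
        · have hcS' : c ∈ S' := ⟨hstep.1, hc⟩
          obtain ⟨x, hxc, hxe⟩ := hstep.2.2
          rw [hge, hab] at hxe
          have : a ∈ G.ends c ∨ b ∈ G.ends c := by
            rcases Sym2.mem_iff.1 hxe with rfl | rfl
            exacts [Or.inl hxc, Or.inr hxc]
          exact ⟨c, hcS', this, ih.1 hcS'⟩
  intro f hf g hg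
  exact (key f hf g (hconn f hf.1 g hg.1)).1 hg

/-- Path extraction: an abstract path carries an injective walk. -/
lemma exists_walk_of_isPath : ∀ (N : ℕ) (P : Set G.E) (a b : G.V), P.ncard ≤ N →
    G.IsPath P a b → a ≠ b →
    ∃ n v e, 1 ≤ n ∧ G.IsWalk n v e ∧ v 0 = a ∧ v n = b ∧
      (∀ s ≤ n, ∀ t ≤ n, v s = v t → s = t) ∧ P = G.eset n e := by
  intro N
  induction N with
  | zero =>
    intro P a b hcard hP hab
    rcases hP with ⟨rfl, -⟩ | ⟨-, hne, -⟩
    · exact absurd rfl hab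
    · exact absurd (Set.ncard_eq_zero (Set.toFinite _) |>.1 (Nat.le_zero.1 hcard))
        (Set.nonempty_iff_ne_empty.1 hne)
  | succ N ih =>
    intro P a b hcard hP hab
    rcases hP with ⟨rfl, -⟩ | ⟨-, hne, hdega, hdegb, hdeg, hconn⟩
    · exact absurd rfl hab
    obtain ⟨ea, heaP, haea, huniq⟩ := deg_eq_one hdega
    obtain ⟨a', ha'a, hends⟩ := G.exists_other ea a haea
    by_cases hab' : a' = b
    · -- single edge
      have hPea : P = {ea} := by
        ext f
        simp only [Set.mem_singleton_iff]
        constructor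
        · intro hfP
          by_contra hfea
          have noea : ∀ c, Relation.ReflTransGen (fun p q => p ∈ P ∧ q ∈ P ∧
              ∃ x, x ∈ G.ends p ∧ x ∈ G.ends q) f c → c ≠ ea := by
            intro c hchain
            induction hchain with
            | refl => exact hfea
            | @tail c g hfc hstep ihc =>
              intro hgea
              obtain ⟨x, hxc, hxe⟩ := hstep.2.2
              rw [hgea, hends] at hxe
              rcases Sym2.mem_iff.1 hxe with rfl | rfl
              · exact ihc (huniq c hstep.1 hxc)
              · obtain ⟨eb, hebP, hbeb, huniqb⟩ := deg_eq_one hdegb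
                have hbc : b ∈ G.ends c := hab' ▸ hxc
                have h1 : c = eb := huniqb c hstep.1 hbc
                have h2 : ea = eb := huniqb ea heaP
                  (by rw [hends]; exact Sym2.mem_iff.2 (Or.inr hab'.symm))
                exact ihc (h1.trans h2.symm)
          exact noea ea (hconn f hfP ea heaP) rfl
        · rintro rfl; exact heaP
      refine ⟨1, fun t => if t = 0 then a else b, fun _ => ea, le_rfl, ?_, rfl, rfl, ?_, ?_⟩
      · intro t ht
        have ht0 : t = 0 := by omega
        subst ht0
        rw [hends, hab']
        norm_num
      · intro s hs t ht h
        interval_cases s <;> interval_cases t <;> simp_all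
      · rw [hPea]; ext f
        simp only [Set.mem_singleton_iff, eset, Set.mem_setOf_eq]
        constructor
        · rintro rfl; exact ⟨0, by omega, rfl⟩
        · rintro ⟨t, -, rfl⟩; rfl
    · -- recurse on P \ {ea}
      have h2 : G.deg P a' = 2 := by
        rcases hdeg a' ha'a hab' with h | h
        · have hpos := deg_pos_of_mem (x := a') heaP (by rw [hends]; simp)
          omega
        · exact h
      have hdega' : G.deg (P \ {ea}) a' = 1 := by
        have hdd := deg_diff_singleton_mem (x := a') heaP (by rw [hends]; simp)
        omega
      have hdegb' : G.deg (P \ {ea}) b = 1 := by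
        have hbea : b ∉ G.ends ea := by
          rw [hends]; simp only [Sym2.mem_iff]
          rintro (rfl | rfl); exacts [hab rfl, hab' rfl]
        rw [deg_diff_singleton_not_mem hbea]; exact hdegb
      have hdega0 : G.deg (P \ {ea}) a = 0 := by
        have hdd := deg_diff_singleton_mem (x := a) heaP haea
        omega
      have hdeg' : ∀ v, v ≠ a' → v ≠ b → G.deg (P \ {ea}) v = 0 ∨ G.deg (P \ {ea}) v = 2 := by
        intro x hxa' hxb
        by_cases hxa : x = a
        · subst hxa; exact Or.inl hdega0
        by_cases hxea : x ∈ G.ends ea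
        · rw [hends] at hxea
          rcases Sym2.mem_iff.1 hxea with rfl | rfl
          exacts [absurd rfl hxa, absurd rfl hxa']
        · rw [deg_diff_singleton_not_mem hxea]
          exact hdeg x hxa hxb
      have hconn' : G.conn (P \ {ea}) := by
        refine conn_diff hconn hends ?_
        intro f hf g hg hfg hgg
        have hgate : ∀ h ∈ P \ {ea}, (a ∈ G.ends h ∨ a' ∈ G.ends h) → a' ∈ G.ends h := by
          intro h hh hor
          rcases hor with h1 | h1
          · exact absurd (huniq h hh.1 h1) hh.2
          · exact h1
        exact .single ⟨hf, hg, a', hgate f hf hfg, hgate g hg hgg⟩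
      have hne' : (P \ {ea}).Nonempty := by
        obtain ⟨eb, hebP, hbeb, -⟩ := deg_eq_one hdegb
        refine ⟨eb, hebP, ?_⟩
        simp only [Set.mem_singleton_iff]
        rintro rfl
        rw [hends] at hbeb
        rcases Sym2.mem_iff.1 hbeb with rfl | rfl
        exacts [hab rfl, hab' rfl]
      have hcard' : (P \ {ea}).ncard ≤ N := by
        have := Set.ncard_diff_singleton_add_one heaP (Set.toFinite _)
        omega
      obtain ⟨n, v, e, hn, hw, hv0, hvn, hvinj, hPe⟩ :=
        ih (P \ {ea}) a' b hcard' (Or.inr ⟨hab', hne', hdega', hdegb', hdeg', hconn'⟩) hab'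
      refine ⟨n + 1, fun t => if t = 0 then a else v (t - 1),
        fun t => if t = 0 then ea else e (t - 1), by omega, ?_, rfl, ?_, ?_, ?_⟩
      · intro t ht
        rcases Nat.eq_zero_or_pos t with rfl | htpos
        · simpa [hv0] using hends
        · have h1 := hw (t - 1) (by omega)
          simp only [if_neg (by omega : ¬ t = 0), if_neg (by omega : ¬ t + 1 = 0)]
          have harith : t - 1 + 1 = t + 1 - 1 := by omega
          rw [h1, harith]
      · simp only [if_neg (by omega : ¬ n + 1 = 0)]
        simpa using hvn
      · -- injectivity
        have hva : ∀ t ≤ n, v t ≠ a := by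
          intro t ht hvt
          rcases Nat.eq_zero_or_pos t with rfl | htpos
          · rw [hv0] at hvt; exact ha'a hvt
          rcases lt_or_eq_of_le ht with ht' | heq
          · have hmem : e t ∈ P \ {ea} := by rw [hPe]; exact mem_eset ht'
            have hpos := deg_pos_of_mem (x := a) hmem (hvt ▸ (walk_vert_mem_ends hw ht').1)
            omega
          · subst heq
            rw [hvn] at hvt
            exact hab hvt.symm
        intro s hs t ht h
        rcases Nat.eq_zero_or_pos s with rfl | hspos <;>
          rcases Nat.eq_zero_or_pos t with rfl | htpos
        · rfl
        · simp only [if_pos rfl, if_neg (by omega : ¬ t = 0)] at h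
          exact absurd h.symm (hva (t-1) (by omega))
        · simp only [if_pos rfl, if_neg (by omega : ¬ s = 0)] at h
          exact absurd h (hva (s-1) (by omega))
        · simp only [if_neg (by omega : ¬ s = 0), if_neg (by omega : ¬ t = 0)] at h
          have := hvinj (s-1) (by omega) (t-1) (by omega) h
          omega
      · ext f
        simp only [eset, Set.mem_setOf_eq]
        constructor
        · intro hfP
          by_cases hfea : f = ea
          · exact ⟨0, by omega, hfea.symm⟩
          · have hmem : f ∈ P \ {ea} := ⟨hfP, hfea⟩
            rw [hPe] at hmem
            obtain ⟨t, ht, rfl⟩ := hmem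
            exact ⟨t + 1, by omega, by simp⟩
        · rintro ⟨t, ht, rfl⟩
          rcases Nat.eq_zero_or_pos t with rfl | htpos
          · simpa using heaP
          · have h1 : e (t - 1) ∈ P \ {ea} := by rw [hPe]; exact mem_eset (show t - 1 < n by omega)
            simp only [if_neg (by omega : ¬ t = 0)]
            exact h1.1

end SGraph
namespace SGraph

variable {G : SGraph}

lemma deg_cycle_two {C : Set G.E} (hC : G.IsCycle C) {f : G.E} (hf : f ∈ C) {x : G.V}
    (hx : x ∈ G.ends f) : G.deg C x = 2 := by
  have hpos := deg_pos_of_mem (x := x) hf hx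
  rcases hC.2.1 x with h | h
  · omega
  · exact h

lemma isPath_cycle_diff {C : Set G.E} (hC : G.IsCycle C) {e₀ : G.E} (he₀ : e₀ ∈ C)
    {a b : G.V} (hab : G.ends e₀ = s(a, b)) : G.IsPath (C \ {e₀}) a b := by
  have hane : a ≠ b := fun h => G.loopless e₀ (by rw [hab, h]; exact Sym2.mk_isDiag_iff.2 rfl)
  have haends : a ∈ G.ends e₀ := by rw [hab]; simp
  have hbends : b ∈ G.ends e₀ := by rw [hab]; simp
  have hdega : G.deg (C \ {e₀}) a = 1 := by
    have h1 := deg_cycle_two hC he₀ haends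
    have h2 := deg_diff_singleton_mem (x := a) he₀ haends
    omega
  have hdegb : G.deg (C \ {e₀}) b = 1 := by
    have h1 := deg_cycle_two hC he₀ hbends
    have h2 := deg_diff_singleton_mem (x := b) he₀ hbends
    omega
  obtain ⟨ga, hgaC, haga, huniqa⟩ := deg_eq_one hdega
  obtain ⟨gb, hgbC, hbgb, huniqb⟩ := deg_eq_one hdegb
  set r' : G.E → G.E → Prop := fun p q => p ∈ C \ {e₀} ∧ q ∈ C \ {e₀} ∧
    ∃ x, x ∈ G.ends p ∧ x ∈ G.ends q with hr'
  have hr'symm : ∀ p q, r' p q → r' q p := by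
    rintro p q ⟨h1, h2, x, h3, h4⟩; exact ⟨h2, h1, x, h4, h3⟩
  set D : Set G.E := {f | f ∈ C \ {e₀} ∧ Relation.ReflTransGen r' ga f} with hD
  have hgaD : ga ∈ D := ⟨hgaC, .refl⟩
  have hDsub : D ⊆ C \ {e₀} := fun f hf => hf.1
  -- D is closed under r'
  have hDclosed : ∀ f ∈ D, ∀ g, r' f g → g ∈ D := by
    rintro f hf g hfg
    exact ⟨hfg.2.1, hf.2.tail hfg⟩
  have hgbD : gb ∈ D := by
    by_contra hgb
    -- parity contradiction
    have hda : G.deg D a = 1 := by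
      have : {f ∈ D | a ∈ G.ends f} = {ga} := by
        ext f
        simp only [Set.mem_setOf_eq, Set.mem_singleton_iff]
        constructor
        · rintro ⟨hfD, hfa⟩; exact huniqa f (hDsub hfD) hfa
        · rintro rfl; exact ⟨hgaD, haga⟩
      rw [deg, this, Set.ncard_singleton]
    have hdb : G.deg D b = 0 := by
      have : {f ∈ D | b ∈ G.ends f} = ∅ := by
        ext f
        simp only [Set.mem_setOf_eq, Set.mem_empty_iff_false, iff_false, not_and]
        intro hfD hfb
        exact hgb ((huniqb f (hDsub hfD) hfb) ▸ hfD)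
      rw [deg, this, Set.ncard_empty]
    have hdeven : ∀ x, x ≠ a → x ≠ b → Even (G.deg D x) := by
      intro x hxa hxb
      by_cases hex : ∃ f ∈ D, x ∈ G.ends f
      · obtain ⟨f, hfD, hxf⟩ := hex
        have hset : {g ∈ D | x ∈ G.ends g} = {g ∈ C | x ∈ G.ends g} := by
          ext g
          simp only [Set.mem_setOf_eq]
          constructor
          · rintro ⟨hgD, hxg⟩; exact ⟨(hDsub hgD).1, hxg⟩
          · rintro ⟨hgC, hxg⟩
            have hgne : g ≠ e₀ := by
              rintro rfl
              rw [hab] at hxg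
              rcases Sym2.mem_iff.1 hxg with rfl | rfl
              exacts [hxa rfl, hxb rfl]
            exact ⟨hDclosed f hfD g ⟨hDsub hfD, ⟨hgC, hgne⟩, x, hxf, hxg⟩, hxg⟩
        have : G.deg D x = G.deg C x := by rw [deg, deg, hset]
        rw [this, deg_cycle_two hC (hDsub hfD).1 hxf]
        exact ⟨1, rfl⟩
      · push_neg at hex
        have : {g ∈ D | x ∈ G.ends g} = ∅ := by
          ext g
          simp only [Set.mem_setOf_eq, Set.mem_empty_iff_false, iff_false, not_and]
          exact hex g
        rw [deg, this, Set.ncard_empty]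
        exact ⟨0, rfl⟩
    have hsum := handshake (G := G) D
    have hsplit : ∑ x : G.V, G.deg D x =
        (∑ x ∈ (Finset.univ.erase a).erase b, G.deg D x) + G.deg D b + G.deg D a := by
      rw [Finset.sum_erase_add _ _ (Finset.mem_erase.2 ⟨Ne.symm hane, Finset.mem_univ b⟩)]
      rw [Finset.sum_erase_add _ _ (Finset.mem_univ a)]
    have heven : Even (∑ x ∈ (Finset.univ.erase a).erase b, G.deg D x) := by
      refine Finset.even_sum _ ?_
      intro x hx
      have hx1 := Finset.mem_erase.1 hx
      have hx2 := Finset.mem_erase.1 hx1.2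
      exact hdeven x hx2.1 hx1.1
    obtain ⟨k, hk⟩ := heven
    omega
  -- now conn
  have hinterlink : ∀ f ∈ C \ {e₀}, ∀ g ∈ C \ {e₀},
      (a ∈ G.ends f ∨ b ∈ G.ends f) → (a ∈ G.ends g ∨ b ∈ G.ends g) →
      Relation.ReflTransGen r' f g := by
    have hgagb : Relation.ReflTransGen r' ga gb := hgbD.2
    have hcases : ∀ f ∈ C \ {e₀}, (a ∈ G.ends f ∨ b ∈ G.ends f) → f = ga ∨ f = gb := by
      intro f hf hor
      rcases hor with h | h
      exacts [Or.inl (huniqa f hf h), Or.inr (huniqb f hf h)]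
    intro f hf g hg hforb hgorb
    rcases hcases f hf hforb with rfl | rfl <;> rcases hcases g hg hgorb with rfl | rfl
    · exact .refl
    · exact hgagb
    · exact rtg_symm hr'symm hgagb
    · exact .refl
  have hconn' : G.conn (C \ {e₀}) := conn_diff hC.2.2 hab hinterlink
  exact Or.inr ⟨hane, ⟨ga, hgaC⟩, hdega, hdegb, fun x hxa hxb => by
    by_cases hxe : x ∈ G.ends e₀
    · rw [hab] at hxe
      rcases Sym2.mem_iff.1 hxe with rfl | rfl
      exacts [absurd rfl hxa, absurd rfl hxb]
    · rw [deg_diff_singleton_not_mem hxe]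
      exact hC.2.1 x, hconn'⟩

end SGraph
namespace SGraph

variable {G : SGraph}

set_option maxHeartbeats 1000000 in
/-- Gluing three openly disjoint walks into a cycle. -/
lemma glue_cycle {n₁ n₂ n₃ : ℕ} {v₁ v₂ v₃ : ℕ → G.V} {e₁ e₂ e₃ : ℕ → G.E}
    (hw1 : G.IsWalk n₁ v₁ e₁) (hw2 : G.IsWalk n₂ v₂ e₂) (hw3 : G.IsWalk n₃ v₃ e₃)
    (h1 : 1 ≤ n₁) (h2 : 1 ≤ n₂) (h3 : 1 ≤ n₃)
    (hj12 : v₁ n₁ = v₂ 0) (hj23 : v₂ n₂ = v₃ 0) (hj31 : v₃ n₃ = v₁ 0)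
    (hv1 : ∀ s ≤ n₁, ∀ t ≤ n₁, v₁ s = v₁ t → s = t)
    (hv2 : ∀ s ≤ n₂, ∀ t ≤ n₂, v₂ s = v₂ t → s = t)
    (hv3 : ∀ s ≤ n₃, ∀ t ≤ n₃, v₃ s = v₃ t → s = t)
    (hx12 : ∀ s ≤ n₁, ∀ t ≤ n₂, v₁ s = v₂ t → s = n₁ ∧ t = 0)
    (hx23 : ∀ s ≤ n₂, ∀ t ≤ n₃, v₂ s = v₃ t → s = n₂ ∧ t = 0)
    (hx13 : ∀ s ≤ n₁, ∀ t ≤ n₃, v₁ s = v₃ t → s = 0 ∧ t = n₃)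
    (hed12 : ∀ s < n₁, ∀ t < n₂, e₁ s ≠ e₂ t)
    (hed23 : ∀ s < n₂, ∀ t < n₃, e₂ s ≠ e₃ t)
    (hed13 : ∀ s < n₁, ∀ t < n₃, e₁ s ≠ e₃ t) :
    ∃ Q, G.IsCycle Q ∧ Q = G.eset n₁ e₁ ∪ G.eset n₂ e₂ ∪ G.eset n₃ e₃ ∧
      G.signOf Q = (∏ t ∈ Finset.range n₁, G.sgn (e₁ t)) *
        (∏ t ∈ Finset.range n₂, G.sgn (e₂ t)) * (∏ t ∈ Finset.range n₃, G.sgn (e₃ t)) := by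
  set N := n₁ + n₂ + n₃ with hN
  set v : ℕ → G.V := fun t => if t ≤ n₁ then v₁ t else
    if t ≤ n₁ + n₂ then v₂ (t - n₁) else v₃ (t - n₁ - n₂) with hv
  set e : ℕ → G.E := fun t => if t < n₁ then e₁ t else
    if t < n₁ + n₂ then e₂ (t - n₁) else e₃ (t - n₁ - n₂) with he
  have hvval1 : ∀ t ≤ n₁, v t = v₁ t := fun t ht => by simp only [hv, if_pos ht]
  have hvval2 : ∀ t, n₁ ≤ t → t ≤ n₁ + n₂ → v t = v₂ (t - n₁) := by
    intro t ht1 ht2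
    rcases eq_or_lt_of_le ht1 with rfl | ht1'
    · simp only [hv, if_pos le_rfl, Nat.sub_self, hj12]
    · simp only [hv, if_neg (by omega : ¬ t ≤ n₁), if_pos ht2]
  have hvval3 : ∀ t, n₁ + n₂ ≤ t → t ≤ N → v t = v₃ (t - n₁ - n₂) := by
    intro t ht1 ht2
    rcases eq_or_lt_of_le ht1 with rfl | ht1'
    · rw [hvval2 (n₁ + n₂) (by omega) le_rfl]
      have ha : n₁ + n₂ - n₁ = n₂ := by omega
      rw [ha, hj23, Nat.sub_self]
    · simp only [hv, if_neg (by omega : ¬ t ≤ n₁), if_neg (by omega : ¬ t ≤ n₁ + n₂)]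
  have heval1 : ∀ t < n₁, e t = e₁ t := fun t ht => by simp only [he, if_pos ht]
  have heval2 : ∀ t, n₁ ≤ t → t < n₁ + n₂ → e t = e₂ (t - n₁) := by
    intro t ht1 ht2
    simp only [he, if_neg (by omega : ¬ t < n₁), if_pos ht2]
  have heval3 : ∀ t, n₁ + n₂ ≤ t → t < N → e t = e₃ (t - n₁ - n₂) := by
    intro t ht1 ht2
    simp only [he, if_neg (by omega : ¬ t < n₁), if_neg (by omega : ¬ t < n₁ + n₂)]
  have hwalk : G.IsWalk N v e := by
    intro t ht
    by_cases hc1 : t < n₁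
    · rw [heval1 t hc1, hvval1 t (by omega), hvval1 (t+1) (by omega)]
      exact hw1 t hc1
    by_cases hc2 : t < n₁ + n₂
    · rw [heval2 t (by omega) hc2, hvval2 t (by omega) (by omega),
        hvval2 (t+1) (by omega) (by omega)]
      have : t + 1 - n₁ = (t - n₁) + 1 := by omega
      rw [this]
      exact hw2 (t - n₁) (by omega)
    · rw [heval3 t (by omega) ht, hvval3 t (by omega) (by omega),
        hvval3 (t+1) (by omega) (by omega)]
      have : t + 1 - n₁ - n₂ = (t - n₁ - n₂) + 1 := by omega
      rw [this]
      exact hw3 (t - n₁ - n₂) (by omega)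
  have hclosed : v N = v 0 := by
    rw [hvval3 N (by omega) le_rfl, hvval1 0 (by omega)]
    have : N - n₁ - n₂ = n₃ := by omega
    rw [this, hj31]
  have hvinj : ∀ s < N, ∀ t < N, v s = v t → s = t := by
    have key : ∀ s < N, ∀ t < N, s ≤ t → v s = v t → s = t := by
      intro s hs t ht hst hvst
      by_cases hs1 : s ≤ n₁ <;> by_cases ht1 : t ≤ n₁
      · rw [hvval1 s hs1, hvval1 t ht1] at hvst
        exact hv1 s hs1 t ht1 hvst
      · by_cases ht2 : t ≤ n₁ + n₂
        · rw [hvval1 s hs1, hvval2 t (by omega) ht2] at hvst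
          have := hx12 s hs1 (t - n₁) (by omega) hvst
          omega
        · rw [hvval1 s hs1, hvval3 t (by omega) (by omega)] at hvst
          have := hx13 s hs1 (t - n₁ - n₂) (by omega) hvst
          omega
      · omega
      · by_cases hs2 : s ≤ n₁ + n₂ <;> by_cases ht2 : t ≤ n₁ + n₂
        · rw [hvval2 s (by omega) hs2, hvval2 t (by omega) ht2] at hvst
          have := hv2 (s - n₁) (by omega) (t - n₁) (by omega) hvst
          omega
        · rw [hvval2 s (by omega) hs2, hvval3 t (by omega) (by omega)] at hvst
          have := hx23 (s - n₁) (by omega) (t - n₁ - n₂) (by omega) hvst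
          omega
        · omega
        · rw [hvval3 s (by omega) (by omega), hvval3 t (by omega) (by omega)] at hvst
          have := hv3 (s - n₁ - n₂) (by omega) (t - n₁ - n₂) (by omega) hvst
          omega
    intro s hs t ht hvst
    rcases le_total s t with h | h
    exacts [key s hs t ht h hvst, (key t ht s hs h hvst.symm).symm]
  have heinj : ∀ s < N, ∀ t < N, e s = e t → s = t := by
    have he1i := walk_einj hw1 hv1
    have he2i := walk_einj hw2 hv2
    have he3i := walk_einj hw3 hv3
    have key : ∀ s < N, ∀ t < N, s ≤ t → e s = e t → s = t := by
      intro s hs t ht hst hest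
      by_cases hs1 : s < n₁ <;> by_cases ht1 : t < n₁
      · rw [heval1 s hs1, heval1 t ht1] at hest
        exact he1i s hs1 t ht1 hest
      · by_cases ht2 : t < n₁ + n₂
        · rw [heval1 s hs1, heval2 t (by omega) ht2] at hest
          exact absurd hest (hed12 s hs1 (t - n₁) (by omega))
        · rw [heval1 s hs1, heval3 t (by omega) (by omega)] at hest
          exact absurd hest (hed13 s hs1 (t - n₁ - n₂) (by omega))
      · omega
      · by_cases hs2 : s < n₁ + n₂ <;> by_cases ht2 : t < n₁ + n₂
        · rw [heval2 s (by omega) hs2, heval2 t (by omega) ht2] at hest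
          have := he2i (s - n₁) (by omega) (t - n₁) (by omega) hest
          omega
        · rw [heval2 s (by omega) hs2, heval3 t (by omega) (by omega)] at hest
          exact absurd hest (hed23 (s - n₁) (by omega) (t - n₁ - n₂) (by omega))
        · omega
        · rw [heval3 s (by omega) (by omega), heval3 t (by omega) (by omega)] at hest
          have := he3i (s - n₁ - n₂) (by omega) (t - n₁ - n₂) (by omega) hest
          omega
    intro s hs t ht hest
    rcases le_total s t with h | h
    exacts [key s hs t ht h hest, (key t ht s hs h hest.symm).symm]
  refine ⟨G.eset N e, isCycle_of_walk hwalk (by omega) hclosed hvinj heinj, ?_, ?_⟩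
  · ext f
    simp only [eset, Set.mem_setOf_eq, Set.mem_union]
    constructor
    · rintro ⟨t, ht, rfl⟩
      by_cases hc1 : t < n₁
      · exact Or.inl (Or.inl ⟨t, hc1, (heval1 t hc1).symm⟩)
      by_cases hc2 : t < n₁ + n₂
      · exact Or.inl (Or.inr ⟨t - n₁, by omega, (heval2 t (by omega) hc2).symm⟩)
      · exact Or.inr ⟨t - n₁ - n₂, by omega, (heval3 t (by omega) ht).symm⟩
    · rintro ((⟨t, ht, rfl⟩ | ⟨t, ht, rfl⟩) | ⟨t, ht, rfl⟩)
      · exact ⟨t, by omega, heval1 t ht⟩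
      · exact ⟨n₁ + t, by omega, by rw [heval2 (n₁ + t) (by omega) (by omega)]; congr 1; omega⟩
      · exact ⟨n₁ + n₂ + t, by omega, by
          rw [heval3 (n₁ + n₂ + t) (by omega) (by omega)]; congr 1; omega⟩
  · rw [signOf_eset heinj, hN, Finset.prod_range_add, Finset.prod_range_add]
    congr 1
    · congr 1
      · exact Finset.prod_congr rfl fun t ht => by
          rw [heval1 t (Finset.mem_range.1 ht)]
      · exact Finset.prod_congr rfl fun t ht => by
          have := Finset.mem_range.1 ht
          rw [heval2 (n₁ + t) (by omega) (by omega)]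
          congr 2; omega
    · exact Finset.prod_congr rfl fun t ht => by
        have := Finset.mem_range.1 ht
        rw [heval3 (n₁ + n₂ + t) (by omega) (by omega)]
        congr 2; omega

end SGraph
namespace SGraph

variable {G : SGraph}

lemma minor_rel_symm {φ : Set G.V} {sw : G.V → ℤˣ} {a b : G.V}
    (h : a ∈ φ ∧ b ∈ φ ∧ ∃ e, G.ends e = s(a, b) ∧ sw a * sw b * G.sgn e = 1) :
    b ∈ φ ∧ a ∈ φ ∧ ∃ e, G.ends e = s(b, a) ∧ sw b * sw a * G.sgn e = 1 := by
  obtain ⟨h1, h2, e, he, hs⟩ := h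
  exact ⟨h2, h1, e, by rw [he]; exact Sym2.eq_swap, by rwa [mul_comm (sw b) (sw a)]⟩

lemma chain_rtg {φ : Set G.V} {sw : G.V → ℤˣ} {n : ℕ} (wv : ℕ → G.V) (ed : ℕ → G.E)
    (hmem : ∀ t ≤ n, wv t ∈ φ)
    (hstep : ∀ t < n, G.ends (ed t) = s(wv t, wv (t+1)) ∧
      sw (wv t) * sw (wv (t+1)) * G.sgn (ed t) = 1) :
    ∀ s ≤ n, ∀ t ≤ n, Relation.ReflTransGen (fun a b => a ∈ φ ∧ b ∈ φ ∧
      ∃ e, G.ends e = s(a, b) ∧ sw a * sw b * G.sgn e = 1) (wv s) (wv t) := by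
  have aux : ∀ t ≤ n, Relation.ReflTransGen (fun a b => a ∈ φ ∧ b ∈ φ ∧
      ∃ e, G.ends e = s(a, b) ∧ sw a * sw b * G.sgn e = 1) (wv 0) (wv t) := by
    intro t
    induction t with
    | zero => intro _; exact .refl
    | succ tt ih =>
      intro ht
      obtain ⟨he, hs⟩ := hstep tt (by omega)
      exact (ih (by omega)).tail ⟨hmem tt (by omega), hmem (tt+1) ht, ed tt, he, hs⟩
  intro s hs t ht
  exact .trans (rtg_symm (fun _ _ => minor_rel_symm) (aux s hs)) (aux t ht)

lemma units_cancel₂ (a b : ℤˣ) : a * (a * b) * b = 1 := by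
  have h : a * (a * b) * b = (a * a) * (b * b) := by
    simp only [mul_comm, mul_left_comm, mul_assoc]
  rw [h, Int.units_mul_self, Int.units_mul_self, one_mul]

lemma units_cancel₃ (c a b : ℤˣ) : (c * a) * (c * (a * b)) * b = 1 := by
  have h : (c * a) * (c * (a * b)) * b = (c * c) * ((a * a) * (b * b)) := by
    simp only [mul_comm, mul_left_comm, mul_assoc]
  rw [h, Int.units_mul_self, Int.units_mul_self, Int.units_mul_self, one_mul, one_mul]

end SGraph
set_option maxHeartbeats 2000000 in
/-- A negative cycle `C` together with two paths `P₁, P₂` from a vertex `y ∉ V(C)` to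
distinct vertices `x₁, x₂` of `C`, meeting each other only in `y` and meeting `C` only
in their ends, yields a hat-minor sending the hat's distinguished edges to any chosen
`f₁ ∈ P₁` and `f₂ ∈ P₂`; in particular any such `f₁, f₂` are untied in `G`. -/
theorem stmt_18 (G : SGraph) (C : Set G.E) (hC : G.IsCycle C) (hneg : G.signOf C = -1)
    (y x₁ x₂ : G.V) (hy : y ∉ G.verts C)
    (hx₁ : x₁ ∈ G.verts C) (hx₂ : x₂ ∈ G.verts C) (hx : x₁ ≠ x₂)
    (P₁ P₂ : Set G.E) (hP₁ : G.IsPath P₁ y x₁) (hP₂ : G.IsPath P₂ y x₂)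
    (hmeet : G.pverts P₁ y x₁ ∩ G.pverts P₂ y x₂ = {y})
    (hint₁ : G.pverts P₁ y x₁ ∩ G.verts C = {x₁})
    (hint₂ : G.pverts P₂ y x₂ ∩ G.verts C = {x₂}) :
    ∀ f₁ ∈ P₁, ∀ f₂ ∈ P₂,
      (∃ (H : SGraph) (ψ : H.E → G.E) (CH : Set H.E) (h₁ h₂ : H.E),
        SGraph.IsSignedMinor H G ψ ∧ H.IsHat CH h₁ h₂ ∧ ψ h₁ = f₁ ∧ ψ h₂ = f₂) ∧
      G.Untied f₁ f₂ := by
  open SGraph in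
  intro f₁ hf₁ f₂ hf₂
  have hmeet' : ∀ z, z ∈ G.pverts P₁ y x₁ → z ∈ G.pverts P₂ y x₂ → z = y := fun z h1 h2 => by
    have : z ∈ ({y} : Set G.V) := hmeet ▸ ⟨h1, h2⟩
    exact this
  have hint₁' : ∀ z, z ∈ G.pverts P₁ y x₁ → z ∈ G.verts C → z = x₁ := fun z h1 h2 => by
    have : z ∈ ({x₁} : Set G.V) := hint₁ ▸ ⟨h1, h2⟩
    exact this
  have hint₂' : ∀ z, z ∈ G.pverts P₂ y x₂ → z ∈ G.verts C → z = x₂ := fun z h1 h2 => by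
    have : z ∈ ({x₂} : Set G.V) := hint₂ ▸ ⟨h1, h2⟩
    exact this
  have hyx₁ : y ≠ x₁ := fun h => hy (h ▸ hx₁)
  have hyx₂ : y ≠ x₂ := fun h => hy (h ▸ hx₂)
  obtain ⟨l₁, p, q, hl₁, hwp, hp0, hpl, hpinj, hP₁e⟩ :=
    SGraph.exists_walk_of_isPath P₁.ncard P₁ y x₁ le_rfl hP₁ hyx₁
  obtain ⟨l₂, p', q', hl₂, hwp', hp'0, hp'l, hp'inj, hP₂e⟩ :=
    SGraph.exists_walk_of_isPath P₂.ncard P₂ y x₂ le_rfl hP₂ hyx₂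
  obtain ⟨ee, heC, hx₂e⟩ := id hx₂
  obtain ⟨w, hwx₂, hends₀⟩ := G.exists_other ee x₂ hx₂e
  have hends₀' : G.ends ee = s(w, x₂) := hends₀.trans (Sym2.eq_swap)
  have hpathC' := SGraph.isPath_cycle_diff hC heC hends₀'
  obtain ⟨m, u, r, hm, hwu, hu0, hum, huinj, hC'e⟩ :=
    SGraph.exists_walk_of_isPath (C \ {ee}).ncard (C \ {ee}) w x₂ le_rfl hpathC' hwx₂
  -- basic membership facts
  have hpv₁ : ∀ t ≤ l₁, p t ∈ G.pverts P₁ y x₁ := by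
    intro t ht
    have h := SGraph.walk_vert_mem_pverts hwp ht
    rwa [hp0, hpl, ← hP₁e] at h
  have hpv₂ : ∀ t ≤ l₂, p' t ∈ G.pverts P₂ y x₂ := by
    intro t ht
    have h := SGraph.walk_vert_mem_pverts hwp' ht
    rwa [hp'0, hp'l, ← hP₂e] at h
  have hrC : ∀ t < m, r t ∈ C := by
    intro t ht
    have h : r t ∈ C \ {ee} := by rw [hC'e]; exact SGraph.mem_eset ht
    exact h.1
  have hrne : ∀ t < m, r t ≠ ee := by
    intro t ht
    have h : r t ∈ C \ {ee} := by rw [hC'e]; exact SGraph.mem_eset ht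
    exact fun hh => h.2 hh
  have hpu : ∀ t ≤ m, u t ∈ G.verts C := by
    intro t ht
    have h := SGraph.walk_vert_mem_pverts hwu ht
    rcases h with ⟨f, hf, hxf⟩ | h
    · have hfC : f ∈ C \ {ee} := by rw [hC'e]; exact hf
      exact ⟨f, hfC.1, hxf⟩
    · rw [hu0, hum] at h
      rcases h with rfl | rfl
      · exact ⟨ee, heC, by rw [hends₀']; simp⟩
      · exact hx₂
  -- find x₁ on the C-walk
  obtain ⟨k, hk, huk⟩ : ∃ k ≤ m, u k = x₁ := by
    obtain ⟨f, hfC, hx₁f⟩ := id hx₁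
    by_cases hfe : f = ee
    · subst hfe
      rw [hends₀'] at hx₁f
      rcases Sym2.mem_iff.1 hx₁f with h | h
      · exact ⟨0, by omega, by rw [hu0, h]⟩
      · exact absurd h.symm hx.symm
    · exact SGraph.verts_eset_subset hwu (by rw [← hC'e]; exact ⟨f, ⟨hfC, hfe⟩, hx₁f⟩)
  have hkm : k < m := by
    rcases lt_or_eq_of_le hk with h | h
    · exact h
    · exact absurd (by rw [← huk, h, hum]) hx
  -- edge disjointness
  have hP₁C : ∀ f ∈ P₁, f ∉ C := by
    intro f hf hfC
    obtain ⟨c, d, hcd⟩ := SGraph.sym2_rep (G.ends f)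
    have hne : c ≠ d := fun h => G.loopless f (by rw [hcd, h]; exact Sym2.mk_isDiag_iff.2 rfl)
    have h1 := hint₁' c (Or.inl ⟨f, hf, by rw [hcd]; simp⟩) ⟨f, hfC, by rw [hcd]; simp⟩
    have h2 := hint₁' d (Or.inl ⟨f, hf, by rw [hcd]; simp⟩) ⟨f, hfC, by rw [hcd]; simp⟩
    exact hne (h1.trans h2.symm)
  have hP₂C : ∀ f ∈ P₂, f ∉ C := by
    intro f hf hfC
    obtain ⟨c, d, hcd⟩ := SGraph.sym2_rep (G.ends f)
    have hne : c ≠ d := fun h => G.loopless f (by rw [hcd, h]; exact Sym2.mk_isDiag_iff.2 rfl)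
    have h1 := hint₂' c (Or.inl ⟨f, hf, by rw [hcd]; simp⟩) ⟨f, hfC, by rw [hcd]; simp⟩
    have h2 := hint₂' d (Or.inl ⟨f, hf, by rw [hcd]; simp⟩) ⟨f, hfC, by rw [hcd]; simp⟩
    exact hne (h1.trans h2.symm)
  have hP₁P₂ : ∀ f ∈ P₁, f ∉ P₂ := by
    intro f hf hfP₂
    obtain ⟨c, d, hcd⟩ := SGraph.sym2_rep (G.ends f)
    have hne : c ≠ d := fun h => G.loopless f (by rw [hcd, h]; exact Sym2.mk_isDiag_iff.2 rfl)
    have h1 := hmeet' c (Or.inl ⟨f, hf, by rw [hcd]; simp⟩) (Or.inl ⟨f, hfP₂, by rw [hcd]; simp⟩)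
    have h2 := hmeet' d (Or.inl ⟨f, hf, by rw [hcd]; simp⟩) (Or.inl ⟨f, hfP₂, by rw [hcd]; simp⟩)
    exact hne (h1.trans h2.symm)
  -- index facts
  have hps_x₁ : ∀ s ≤ l₁, p s ∈ G.verts C → s = l₁ := by
    intro s hs hsC
    have h := hint₁' (p s) (hpv₁ s hs) hsC
    exact hpinj s hs l₁ le_rfl (h.trans hpl.symm)
  have hp's_x₂ : ∀ s ≤ l₂, p' s ∈ G.verts C → s = l₂ := by
    intro s hs hsC
    have h := hint₂' (p' s) (hpv₂ s hs) hsC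
    exact hp'inj s hs l₂ le_rfl (h.trans hp'l.symm)
  have hpp' : ∀ s ≤ l₁, ∀ t ≤ l₂, p s = p' t → s = 0 ∧ t = 0 := by
    intro s hs t ht h
    have h1 := hmeet' (p s) (hpv₁ s hs) (h ▸ hpv₂ t ht)
    have h2 : p' t = y := h ▸ h1
    exact ⟨hpinj s hs 0 (by omega) (h1.trans hp0.symm),
      hp'inj t ht 0 (by omega) (h2.trans hp'0.symm)⟩
  have hpu' : ∀ s ≤ l₁, ∀ t ≤ m, p s = u t → s = l₁ ∧ t = k := by
    intro s hs t ht h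
    have h1 := hps_x₁ s hs (h ▸ hpu t ht)
    have h2 : u t = x₁ := by rw [← h, h1, hpl]
    exact ⟨h1, huinj t ht k hk (h2.trans huk.symm)⟩
  have hp'u : ∀ s ≤ l₂, ∀ t ≤ m, p' s = u t → s = l₂ ∧ t = m := by
    intro s hs t ht h
    have h1 := hp's_x₂ s hs (h ▸ hpu t ht)
    have h2 : u t = x₂ := by rw [← h, h1, hp'l]
    exact ⟨h1, huinj t ht m le_rfl (h2.trans hum.symm)⟩
  -- edge indices for f₁ f₂
  obtain ⟨i, hi, hqi⟩ : ∃ i < l₁, q i = f₁ := by rw [hP₁e] at hf₁; exact hf₁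
  obtain ⟨j, hj, hq'j⟩ : ∃ j < l₂, q' j = f₂ := by rw [hP₂e] at hf₂; exact hf₂
  -- reversed P₂ walk (third piece, shared by both cycles)
  set v₃ : ℕ → G.V := fun t => p' (l₂ - t) with hv₃
  set e₃ : ℕ → G.E := fun t => q' (l₂ - 1 - t) with he₃
  have hw3 : G.IsWalk l₂ v₃ e₃ := by
    intro t ht
    have h := hwp' (l₂ - 1 - t) (by omega)
    have ha : l₂ - 1 - t + 1 = l₂ - t := by omega
    have hb : l₂ - (t + 1) = l₂ - 1 - t := by omega
    rw [ha] at h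
    show G.ends (q' (l₂ - 1 - t)) = s(p' (l₂ - t), p' (l₂ - (t+1)))
    rw [h, hb]
    exact Sym2.eq_swap
  have hv3inj : ∀ s ≤ l₂, ∀ t ≤ l₂, v₃ s = v₃ t → s = t := by
    intro s hs t ht h
    have := hp'inj (l₂ - s) (by omega) (l₂ - t) (by omega) h
    omega
  have he₃mem : ∀ t < l₂, e₃ t ∈ P₂ := by
    intro t ht
    rw [hP₂e]
    exact SGraph.mem_eset (n := l₂) (by omega : l₂ - 1 - t < l₂)
  -- cycle A : P₁ + upper arc (u from k to m) + reversed P₂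
  obtain ⟨QA, hQAcyc, hQAset, hQAsgn⟩ := SGraph.glue_cycle
    (n₁ := l₁) (n₂ := m - k) (n₃ := l₂)
    (v₁ := p) (v₂ := fun t => u (k + t)) (v₃ := v₃)
    (e₁ := q) (e₂ := fun t => r (k + t)) (e₃ := e₃)
    hwp
    (by intro t ht
        have h := hwu (k + t) (by omega)
        have ha : k + t + 1 = k + (t + 1) := by omega
        rw [ha] at h
        exact h)
    hw3 hl₁ (by omega) hl₂
    (by show p l₁ = u (k + 0); rw [hpl, Nat.add_zero, huk])
    (by show u (k + (m - k)) = v₃ 0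
        have ha : k + (m - k) = m := by omega
        rw [ha, hum, hv₃]
        show x₂ = p' (l₂ - 0)
        rw [Nat.sub_zero, hp'l])
    (by show v₃ l₂ = p 0; rw [hv₃]; show p' (l₂ - l₂) = p 0; rw [Nat.sub_self, hp'0, hp0])
    hpinj
    (by intro s hs t ht h
        have := huinj (k + s) (by omega) (k + t) (by omega) h
        omega)
    hv3inj
    (by intro s hs t ht h
        have := hpu' s hs (k + t) (by omega) h
        omega)
    (by intro s hs t ht h
        have := hp'u (l₂ - t) (by omega) (k + s) (by omega) h.symm
        omega)
    (by intro s hs t ht h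
        have := hpp' s hs (l₂ - t) (by omega) h
        omega)
    (by intro s hs t ht h
        exact hP₁C (q s) (by rw [hP₁e]; exact SGraph.mem_eset hs) (h ▸ hrC (k + t) (by omega)))
    (by intro s hs t ht h
        exact hP₂C (e₃ t) (he₃mem t ht) (h ▸ hrC (k + s) (by omega)))
    (by intro s hs t ht h
        exact hP₁P₂ (q s) (by rw [hP₁e]; exact SGraph.mem_eset hs) (h ▸ he₃mem t ht))
  -- cycle B : P₁ + lower arc reversed (x₁ = u k back to u 0 = w then ee to x₂) + reversed P₂
  set v₂' : ℕ → G.V := fun t => if t ≤ k then u (k - t) else x₂ with hv₂'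
  set e₂' : ℕ → G.E := fun t => if t < k then r (k - 1 - t) else ee with he₂'
  have hv₂'val : ∀ t ≤ k, v₂' t = u (k - t) := fun t ht => by simp only [hv₂', if_pos ht]
  have hv₂'last : v₂' (k + 1) = x₂ := by simp only [hv₂', if_neg (by omega : ¬ k + 1 ≤ k)]
  have he₂'C : ∀ t < k + 1, e₂' t ∈ C := by
    intro t ht
    by_cases h : t < k
    · simp only [he₂', if_pos h]; exact hrC (k - 1 - t) (by omega)
    · simp only [he₂', if_neg h]; exact heC
  have hw2' : G.IsWalk (k + 1) v₂' e₂' := by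
    intro t ht
    by_cases h : t < k
    · have hh := hwu (k - 1 - t) (by omega)
      have ha : k - 1 - t + 1 = k - t := by omega
      have hb : k - (t + 1) = k - 1 - t := by omega
      rw [ha] at hh
      rw [hv₂'val t (by omega), hv₂'val (t + 1) (by omega)]
      simp only [he₂', if_pos h]
      rw [hh, hb]
      exact Sym2.eq_swap
    · have ht' : t = k := by omega
      rw [ht']
      simp only [he₂', if_neg (lt_irrefl k)]
      rw [hv₂'val k le_rfl, Nat.sub_self, hu0, hv₂'last]
      exact hends₀'
  have hv₂'inj : ∀ s ≤ k + 1, ∀ t ≤ k + 1, v₂' s = v₂' t → s = t := by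
    have hux₂ : ∀ s ≤ k, u (k - s) ≠ x₂ := by
      intro s hs h
      have := huinj (k - s) (by omega) m le_rfl (h.trans hum.symm)
      omega
    intro s hs t ht h
    by_cases hs' : s ≤ k <;> by_cases ht' : t ≤ k
    · rw [hv₂'val s hs', hv₂'val t ht'] at h
      have := huinj (k - s) (by omega) (k - t) (by omega) h
      omega
    · have ht'' : t = k + 1 := by omega
      subst ht''
      rw [hv₂'val s hs', hv₂'last] at h
      exact absurd h (hux₂ s hs')
    · have hs'' : s = k + 1 := by omega
      subst hs''
      rw [hv₂'last, hv₂'val t ht'] at h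
      exact absurd h.symm (hux₂ t ht')
    · omega
  have hv₂'vertsC : ∀ t ≤ k + 1, v₂' t ∈ G.verts C := by
    intro t ht
    by_cases h : t ≤ k
    · rw [hv₂'val t h]; exact hpu (k - t) (by omega)
    · have : t = k + 1 := by omega
      subst this; rw [hv₂'last]; exact hx₂
  obtain ⟨QB, hQBcyc, hQBset, hQBsgn⟩ := SGraph.glue_cycle
    (n₁ := l₁) (n₂ := k + 1) (n₃ := l₂)
    (v₁ := p) (v₂ := v₂') (v₃ := v₃)
    (e₁ := q) (e₂ := e₂') (e₃ := e₃)
    hwp hw2' hw3 hl₁ (by omega) hl₂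
    (by rw [hpl, hv₂'val 0 (by omega), Nat.sub_zero, huk])
    (by rw [hv₂'last, hv₃]; show x₂ = p' (l₂ - 0); rw [Nat.sub_zero, hp'l])
    (by rw [hv₃]; show p' (l₂ - l₂) = p 0; rw [Nat.sub_self, hp'0, hp0])
    hpinj hv₂'inj hv3inj
    (by -- p s = v₂' t
      intro s hs t ht h
      by_cases ht' : t ≤ k
      · rw [hv₂'val t ht'] at h
        have h1 := hpu' s hs (k - t) (by omega) h
        have : k - t = k := h1.2
        omega
      · have htt : t = k + 1 := by omega
        subst htt
        rw [hv₂'last] at h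
        have h1 := hint₁' (p s) (hpv₁ s hs) (h ▸ hx₂)
        exact absurd (h.symm.trans h1) hx.symm)
    (by -- v₂' s = v₃ t
      intro s hs t ht h
      have hvc : p' (l₂ - t) ∈ G.verts C := by
        have hmem := hv₂'vertsC s hs
        rw [h] at hmem
        exact hmem
      have h1 := hp's_x₂ (l₂ - t) (by omega) hvc
      have h2 : v₂' s = x₂ := by rw [h]; show p' (l₂ - t) = x₂; rw [h1, hp'l]
      constructor
      · by_cases hs' : s ≤ k
        · rw [hv₂'val s hs'] at h2
          have := huinj (k - s) (by omega) m le_rfl (h2.trans hum.symm)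
          omega
        · omega
      · omega)
    (by intro s hs t ht h
        have := hpp' s hs (l₂ - t) (by omega) h
        omega)
    (by intro s hs t ht h
        exact hP₁C (q s) (by rw [hP₁e]; exact SGraph.mem_eset hs) (h ▸ he₂'C t ht))
    (by intro s hs t ht h
        exact hP₂C (e₃ t) (he₃mem t ht) (h ▸ he₂'C s hs))
    (by intro s hs t ht h
        exact hP₁P₂ (q s) (by rw [hP₁e]; exact SGraph.mem_eset hs) (h ▸ he₃mem t ht))
  -- sign bookkeeping
  have herinj := SGraph.walk_einj hwu huinj
  have hrefl : ∏ t ∈ Finset.range l₂, G.sgn (e₃ t) = ∏ t ∈ Finset.range l₂, G.sgn (q' t) :=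
    Finset.prod_range_reflect (fun t => G.sgn (q' t)) l₂
  have hsplitC : G.sgn ee * ∏ t ∈ Finset.range m, G.sgn (r t) = -1 := by
    have hsub : ({ee} : Set G.E) ⊆ C := by simpa using heC
    have hsplit : ({ee} : Set G.E) ∪ (C \ {ee}) = C := Set.union_diff_cancel hsub
    have hdisj : Disjoint ({ee} : Set G.E) (C \ {ee}) := by
      rw [Set.disjoint_left]
      rintro f rfl hf
      exact hf.2 rfl
    have h1 := SGraph.signOf_union (G := G) hdisj
    rw [hsplit, hneg] at h1
    have h2 : G.signOf {ee} = G.sgn ee := finprod_mem_singleton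
    have h3 : G.signOf (C \ {ee}) = ∏ t ∈ Finset.range m, G.sgn (r t) := by
      rw [hC'e]; exact SGraph.signOf_eset herinj
    rw [h2, h3] at h1
    exact h1.symm
  have harcB : ∏ t ∈ Finset.range (k + 1), G.sgn (e₂' t) =
      (∏ t ∈ Finset.range k, G.sgn (r t)) * G.sgn ee := by
    rw [Finset.prod_range_succ]
    congr 1
    · rw [← Finset.prod_range_reflect (fun t => G.sgn (r t)) k]
      refine Finset.prod_congr rfl fun t ht => ?_
      have := Finset.mem_range.1 ht
      simp only [he₂', if_pos this]
    · simp only [he₂', if_neg (lt_irrefl k)]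
  have harcs : (∏ t ∈ Finset.range (m - k), G.sgn (r (k + t))) *
      ∏ t ∈ Finset.range (k + 1), G.sgn (e₂' t) = -1 := by
    rw [harcB]
    have h1 : (∏ t ∈ Finset.range k, G.sgn (r t)) *
        ∏ t ∈ Finset.range (m - k), G.sgn (r (k + t)) =
        ∏ t ∈ Finset.range m, G.sgn (r t) := by
      rw [← Finset.prod_range_add]
      have hkm' : k + (m - k) = m := by omega
      rw [hkm']
    calc (∏ t ∈ Finset.range (m - k), G.sgn (r (k + t))) *
        ((∏ t ∈ Finset.range k, G.sgn (r t)) * G.sgn ee)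
        = G.sgn ee * ((∏ t ∈ Finset.range k, G.sgn (r t)) *
          ∏ t ∈ Finset.range (m - k), G.sgn (r (k + t))) := by
            simp only [mul_comm, mul_left_comm, mul_assoc]
      _ = -1 := by rw [h1]; exact hsplitC
  have hQAQB : G.signOf QA * G.signOf QB = -1 := by
    rw [hQAsgn, hQBsgn, hrefl]
    have key : ∀ a b c d s : ℤˣ, b * d = -1 → a * b * s * (a * d * s) = -1 := by
      intro a b c d s hbd
      calc a * b * s * (a * d * s) = (a * a) * (s * s) * (b * d) := by
            simp only [mul_comm, mul_left_comm, mul_assoc]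
        _ = -1 := by rw [Int.units_mul_self, Int.units_mul_self, one_mul, one_mul, hbd]
    exact key _ _ 1 _ _ harcs
  -- memberships
  have hf₁QA : f₁ ∈ QA := by
    rw [hQAset]; exact Or.inl (Or.inl (by rw [← hP₁e]; exact hf₁))
  have hf₁QB : f₁ ∈ QB := by
    rw [hQBset]; exact Or.inl (Or.inl (by rw [← hP₁e]; exact hf₁))
  have hf₂e₃ : f₂ ∈ G.eset l₂ e₃ := by
    refine ⟨l₂ - 1 - j, by omega, ?_⟩
    show q' (l₂ - 1 - (l₂ - 1 - j)) = f₂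
    have : l₂ - 1 - (l₂ - 1 - j) = j := by omega
    rw [this, hq'j]
  have hf₂QA : f₂ ∈ QA := by rw [hQAset]; exact Or.inr hf₂e₃
  have hf₂QB : f₂ ∈ QB := by rw [hQBset]; exact Or.inr hf₂e₃
  constructor
  · -- the hat minor
    classical
    set Qp : ℕ → ℤˣ := fun t => ∏ s ∈ Finset.range t, G.sgn (q s) with hQp
    set Qp' : ℕ → ℤˣ := fun t => ∏ s ∈ Finset.range t, G.sgn (q' s) with hQp'
    set Rp : ℕ → ℤˣ := fun t => ∏ s ∈ Finset.range t, G.sgn (r s) with hRp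
    set cv : ℤˣ := Qp l₁ * Rp k with hcv
    set sw : G.V → ℤˣ := fun z =>
      if h1 : ∃ t ≤ l₁, p t = z then Qp h1.choose
      else if h2 : ∃ t ≤ l₂, p' t = z then Qp' h2.choose
      else if h3 : ∃ t ≤ m, u t = z then cv * Rp h3.choose
      else 1 with hsw
    have hQpsucc : ∀ t, Qp (t+1) = Qp t * G.sgn (q t) := fun t => Finset.prod_range_succ _ t
    have hQp'succ : ∀ t, Qp' (t+1) = Qp' t * G.sgn (q' t) := fun t => Finset.prod_range_succ _ t
    have hRpsucc : ∀ t, Rp (t+1) = Rp t * G.sgn (r t) := fun t => Finset.prod_range_succ _ t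
    have hswp : ∀ t ≤ l₁, sw (p t) = Qp t := by
      intro t ht
      have h1 : ∃ s ≤ l₁, p s = p t := ⟨t, ht, rfl⟩
      simp only [hsw]
      rw [dif_pos h1]
      obtain ⟨hc1, hc2⟩ := h1.choose_spec
      rw [hpinj _ hc1 t ht hc2]
    have hswp' : ∀ t ≤ l₂, sw (p' t) = Qp' t := by
      intro t ht
      by_cases h1 : ∃ s ≤ l₁, p s = p' t
      · obtain ⟨s, hs, hsp⟩ := id h1
        obtain ⟨hs0, ht0⟩ := hpp' s hs t ht hsp
        subst ht0
        simp only [hsw]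
        rw [dif_pos h1]
        obtain ⟨hc1, hc2⟩ := h1.choose_spec
        have h0 : h1.choose = 0 := (hpp' _ hc1 0 (by omega) hc2).1
        rw [h0]
        have ha : Qp 0 = 1 := Finset.prod_range_zero _
        have hb : Qp' 0 = 1 := Finset.prod_range_zero _
        rw [ha, hb]
      · by_cases h2 : ∃ s ≤ l₂, p' s = p' t
        · simp only [hsw]
          rw [dif_neg h1, dif_pos h2]
          obtain ⟨hc1, hc2⟩ := h2.choose_spec
          rw [hp'inj _ hc1 t ht hc2]
        · exact absurd ⟨t, ht, rfl⟩ h2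
    have hswu : ∀ t < m, sw (u t) = cv * Rp t := by
      intro t ht
      by_cases h1 : ∃ s ≤ l₁, p s = u t
      · obtain ⟨hc1, hc2⟩ := h1.choose_spec
        obtain ⟨hsl, htk⟩ := hpu' _ hc1 t (by omega) hc2
        simp only [hsw]
        rw [dif_pos h1, hsl, htk, hcv, mul_assoc, Int.units_mul_self, mul_one]
      · by_cases h2 : ∃ s ≤ l₂, p' s = u t
        · obtain ⟨s, hs, hsp⟩ := id h2
          have := hp'u s hs t (by omega) hsp
          omega
        · have h3 : ∃ s ≤ m, u s = u t := ⟨t, by omega, rfl⟩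
          simp only [hsw]
          rw [dif_neg h1, dif_neg h2, dif_pos h3]
          obtain ⟨hc1, hc2⟩ := h3.choose_spec
          rw [huinj _ hc1 t (by omega) hc2]
    have hstep_p : ∀ t < l₁, sw (p t) * sw (p (t+1)) * G.sgn (q t) = 1 := by
      intro t ht
      rw [hswp t (by omega), hswp (t+1) (by omega), hQpsucc t]
      exact SGraph.units_cancel₂ _ _
    have hstep_p' : ∀ t < l₂, sw (p' t) * sw (p' (t+1)) * G.sgn (q' t) = 1 := by
      intro t ht
      rw [hswp' t (by omega), hswp' (t+1) (by omega), hQp'succ t]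
      exact SGraph.units_cancel₂ _ _
    have hstep_u : ∀ t, t + 1 < m → sw (u t) * sw (u (t+1)) * G.sgn (r t) = 1 := by
      intro t ht
      rw [hswu t (by omega), hswu (t+1) (by omega), hRpsucc t]
      exact SGraph.units_cancel₃ _ _ _
    -- branch sets
    set φ1 : Set G.V := {z | (∃ t, i + 1 ≤ t ∧ t ≤ l₁ ∧ p t = z) ∨ ∃ t, t < m ∧ u t = z} with hφ1
    set φ2 : Set G.V := {z | ∃ t, j + 1 ≤ t ∧ t ≤ l₂ ∧ p' t = z} with hφ2
    set φ3 : Set G.V := {z | (∃ t, t ≤ i ∧ p t = z) ∨ ∃ t, t ≤ j ∧ p' t = z} with hφ3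
    have hx₁φ1 : x₁ ∈ φ1 := Or.inr ⟨k, hkm, huk⟩
    have hpφ1 : ∀ t, i + 1 ≤ t → t ≤ l₁ → p t ∈ φ1 := fun t h1 h2 => Or.inl ⟨t, h1, h2, rfl⟩
    have huφ1 : ∀ t < m, u t ∈ φ1 := fun t ht => Or.inr ⟨t, ht, rfl⟩
    have hx₂φ2 : x₂ ∈ φ2 := ⟨l₂, by omega, le_rfl, hp'l⟩
    have hp'φ2 : ∀ t, j + 1 ≤ t → t ≤ l₂ → p' t ∈ φ2 := fun t h1 h2 => ⟨t, h1, h2, rfl⟩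
    have hyφ3 : y ∈ φ3 := Or.inl ⟨0, by omega, hp0⟩
    -- chains
    have hch1 := SGraph.chain_rtg (G := G) (φ := φ1) (sw := sw) (n := l₁ - (i+1))
      (fun t => p (i+1+t)) (fun t => q (i+1+t))
      (fun t ht => hpφ1 (i+1+t) (by omega) (by omega))
      (fun t ht => by
        have harith : i+1+t+1 = i+1+(t+1) := by omega
        constructor
        · have h := hwp (i+1+t) (by omega)
          rw [harith] at h
          exact h
        · have h := hstep_p (i+1+t) (by omega)
          rw [harith] at h
          exact h)
    have hch2 := SGraph.chain_rtg (G := G) (φ := φ1) (sw := sw) (n := m - 1) u r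
      (fun t ht => huφ1 t (by omega))
      (fun t ht => ⟨hwu t (by omega), hstep_u t (by omega)⟩)
    have hch3 := SGraph.chain_rtg (G := G) (φ := φ2) (sw := sw) (n := l₂ - (j+1))
      (fun t => p' (j+1+t)) (fun t => q' (j+1+t))
      (fun t ht => hp'φ2 (j+1+t) (by omega) (by omega))
      (fun t ht => by
        have harith : j+1+t+1 = j+1+(t+1) := by omega
        constructor
        · have h := hwp' (j+1+t) (by omega)
          rw [harith] at h
          exact h
        · have h := hstep_p' (j+1+t) (by omega)
          rw [harith] at h
          exact h)
    have hch4 := SGraph.chain_rtg (G := G) (φ := φ3) (sw := sw) (n := i) p q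
      (fun t ht => Or.inl ⟨t, ht, rfl⟩)
      (fun t ht => ⟨hwp t (by omega), hstep_p t (by omega)⟩)
    have hch5 := SGraph.chain_rtg (G := G) (φ := φ3) (sw := sw) (n := j) p' q'
      (fun t ht => Or.inr ⟨t, ht, rfl⟩)
      (fun t ht => ⟨hwp' t (by omega), hstep_p' t (by omega)⟩)
    have hreach1 : ∀ z ∈ φ1, Relation.ReflTransGen (fun a b => a ∈ φ1 ∧ b ∈ φ1 ∧
        ∃ e, G.ends e = s(a, b) ∧ sw a * sw b * G.sgn e = 1) z x₁ := by
      rintro z (⟨t, ht1, ht2, rfl⟩ | ⟨t, ht, rfl⟩)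
      · have h := hch1 (t - (i+1)) (by omega) (l₁ - (i+1)) (by omega)
        beta_reduce at h
        have ha : i+1+(t-(i+1)) = t := by omega
        have hb : i+1+(l₁-(i+1)) = l₁ := by omega
        rw [ha, hb, hpl] at h
        exact h
      · have h := hch2 t (by omega) k (by omega)
        rw [huk] at h
        exact h
    have hreach2 : ∀ z ∈ φ2, Relation.ReflTransGen (fun a b => a ∈ φ2 ∧ b ∈ φ2 ∧
        ∃ e, G.ends e = s(a, b) ∧ sw a * sw b * G.sgn e = 1) z x₂ := by
      rintro z ⟨t, ht1, ht2, rfl⟩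
      have h := hch3 (t - (j+1)) (by omega) (l₂ - (j+1)) (by omega)
      beta_reduce at h
      have ha : j+1+(t-(j+1)) = t := by omega
      have hb : j+1+(l₂-(j+1)) = l₂ := by omega
      rw [ha, hb, hp'l] at h
      exact h
    have hreach3 : ∀ z ∈ φ3, Relation.ReflTransGen (fun a b => a ∈ φ3 ∧ b ∈ φ3 ∧
        ∃ e, G.ends e = s(a, b) ∧ sw a * sw b * G.sgn e = 1) z y := by
      rintro z (⟨t, ht, rfl⟩ | ⟨t, ht, rfl⟩)
      · have h := hch4 t ht 0 (by omega)
        rw [hp0] at h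
        exact h
      · have h := hch5 t ht 0 (by omega)
        rw [hp'0] at h
        exact h
    -- disjointness
    have hd12 : Disjoint φ1 φ2 := by
      rw [Set.disjoint_left]
      rintro z (⟨t, ht1, ht2, rfl⟩ | ⟨t, ht, rfl⟩) ⟨s, hs1, hs2, hseq⟩
      · have := hpp' t ht2 s hs2 hseq.symm
        omega
      · have := hp'u s hs2 t (by omega) hseq
        omega
    have hd13 : Disjoint φ1 φ3 := by
      rw [Set.disjoint_left]
      rintro z (⟨t, ht1, ht2, rfl⟩ | ⟨t, ht, rfl⟩) (⟨s, hs, hseq⟩ | ⟨s, hs, hseq⟩)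
      · have := hpinj s (by omega) t (by omega) hseq
        omega
      · have := hpp' t ht2 s (by omega) hseq.symm
        omega
      · have := hpu' s (by omega) t (by omega) hseq
        omega
      · have := hp'u s (by omega) t (by omega) hseq
        omega
    have hd23 : Disjoint φ2 φ3 := by
      rw [Set.disjoint_left]
      rintro z ⟨t, ht1, ht2, rfl⟩ (⟨s, hs, hseq⟩ | ⟨s, hs, hseq⟩)
      · have := hpp' s (by omega) t ht2 hseq
        omega
      · have := hp'inj s (by omega) t ht2 hseq
        omega
    -- hat sign product
    have hABkey : (sw (u 0) * sw x₂ * G.sgn ee) *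
        (sw (u (m-1)) * sw x₂ * G.sgn (r (m-1))) = -1 := by
      rw [hswu 0 (by omega), hswu (m-1) (by omega)]
      have h0 : Rp 0 = 1 := Finset.prod_range_zero _
      have h2 : Rp (m-1) * G.sgn (r (m-1)) = Rp m := by
        have harith : m - 1 + 1 = m := by omega
        rw [← harith]
        exact (hRpsucc (m-1)).symm
      rw [h0, mul_one]
      have hAC : (cv * sw x₂ * G.sgn ee) * (cv * Rp (m-1) * sw x₂ * G.sgn (r (m-1))) =
          (cv * cv) * ((sw x₂ * sw x₂) * ((Rp (m-1) * G.sgn (r (m-1))) * G.sgn ee)) := by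
        simp only [mul_comm, mul_left_comm, mul_assoc]
      rw [hAC, Int.units_mul_self, Int.units_mul_self, one_mul, one_mul, h2, mul_comm]
      exact hsplitC
    -- distinctness of the four image edges
    have hineq1 : ee ≠ r (m-1) := fun h => hrne (m-1) (by omega) h.symm
    have hineq2 : ee ≠ f₁ := fun h => hP₁C f₁ hf₁ (h ▸ heC)
    have hineq3 : ee ≠ f₂ := fun h => hP₂C f₂ hf₂ (h ▸ heC)
    have hineq4 : r (m-1) ≠ f₁ := fun h => hP₁C f₁ hf₁ (h ▸ hrC (m-1) (by omega))
    have hineq5 : r (m-1) ≠ f₂ := fun h => hP₂C f₂ hf₂ (h ▸ hrC (m-1) (by omega))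
    have hineq6 : f₁ ≠ f₂ := fun h => hP₁P₂ f₁ hf₁ (h ▸ hf₂)
    refine ⟨⟨Fin 3, Fin 4,
          ![s(0,1), s(0,1), s(0,2), s(1,2)],
          by decide,
          ![sw (u 0) * sw x₂ * G.sgn ee, sw (u (m-1)) * sw x₂ * G.sgn (r (m-1)),
            sw (p (i+1)) * sw (p i) * G.sgn f₁, sw (p' (j+1)) * sw (p' j) * G.sgn f₂]⟩,
      ![ee, r (m-1), f₁, f₂], {0, 1}, 2, 3, ?_, ?_, rfl, rfl⟩
    · refine ⟨?_, ![φ1, φ2, φ3], sw, ?_, ?_, ?_, ?_⟩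
      · intro a b hab
        fin_cases a <;> fin_cases b <;>
          first
            | rfl
            | exact absurd hab hineq1 | exact absurd hab hineq2 | exact absurd hab hineq3
            | exact absurd hab hineq4 | exact absurd hab hineq5 | exact absurd hab hineq6
            | exact absurd hab (Ne.symm hineq1) | exact absurd hab (Ne.symm hineq2)
            | exact absurd hab (Ne.symm hineq3) | exact absurd hab (Ne.symm hineq4)
            | exact absurd hab (Ne.symm hineq5) | exact absurd hab (Ne.symm hineq6)
      · intro a
        fin_cases a <;>
          first
            | exact ⟨x₁, hx₁φ1⟩ | exact ⟨x₂, hx₂φ2⟩ | exact ⟨y, hyφ3⟩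
      · intro a b hab
        fin_cases a <;> fin_cases b <;>
          first
            | exact absurd rfl hab
            | exact hd12 | exact hd13 | exact hd23
            | exact hd12.symm | exact hd13.symm | exact hd23.symm
      · intro a
        fin_cases a
        · intro z1 hz1 z2 hz2
          exact .trans (hreach1 z1 hz1)
            (SGraph.rtg_symm (fun _ _ => SGraph.minor_rel_symm) (hreach1 z2 hz2))
        · intro z1 hz1 z2 hz2
          exact .trans (hreach2 z1 hz1)
            (SGraph.rtg_symm (fun _ _ => SGraph.minor_rel_symm) (hreach2 z2 hz2))
        · intro z1 hz1 z2 hz2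
          exact .trans (hreach3 z1 hz1)
            (SGraph.rtg_symm (fun _ _ => SGraph.minor_rel_symm) (hreach3 z2 hz2))
      · intro h a b hab
        fin_cases h
        · have hab' : s((0 : Fin 3), 1) = s(a, b) := hab
          rcases Sym2.eq_iff.1 hab' with ⟨ha, hb⟩ | ⟨ha, hb⟩ <;> subst ha <;> subst hb
          · exact ⟨u 0, huφ1 0 (by omega), x₂, hx₂φ2,
              by rw [hu0]; exact hends₀', rfl⟩
          · exact ⟨x₂, hx₂φ2, u 0, huφ1 0 (by omega),
              by rw [hu0]; exact hends₀'.trans Sym2.eq_swap,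
              by rw [mul_comm (sw x₂) (sw (u 0))]; rfl⟩
        · have hab' : s((0 : Fin 3), 1) = s(a, b) := hab
          have hre : G.ends (r (m-1)) = s(u (m-1), x₂) := by
            have h := hwu (m-1) (by omega)
            have harith : m - 1 + 1 = m := by omega
            rw [harith, hum] at h
            exact h
          rcases Sym2.eq_iff.1 hab' with ⟨ha, hb⟩ | ⟨ha, hb⟩ <;> subst ha <;> subst hb
          · exact ⟨u (m-1), huφ1 (m-1) (by omega), x₂, hx₂φ2, hre, rfl⟩
          · exact ⟨x₂, hx₂φ2, u (m-1), huφ1 (m-1) (by omega), hre.trans Sym2.eq_swap,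
              by rw [mul_comm (sw x₂) (sw (u (m-1)))]; rfl⟩
        · have hab' : s((0 : Fin 3), 2) = s(a, b) := hab
          have hfe : G.ends f₁ = s(p (i+1), p i) := by
            rw [← hqi]
            exact (hwp i hi).trans Sym2.eq_swap
          rcases Sym2.eq_iff.1 hab' with ⟨ha, hb⟩ | ⟨ha, hb⟩ <;> subst ha <;> subst hb
          · exact ⟨p (i+1), hpφ1 (i+1) le_rfl (by omega), p i, Or.inl ⟨i, le_rfl, rfl⟩,
              hfe, rfl⟩
          · exact ⟨p i, Or.inl ⟨i, le_rfl, rfl⟩, p (i+1), hpφ1 (i+1) le_rfl (by omega),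
              hfe.trans Sym2.eq_swap, by rw [mul_comm (sw (p i)) (sw (p (i+1)))]; rfl⟩
        · have hab' : s((1 : Fin 3), 2) = s(a, b) := hab
          have hfe : G.ends f₂ = s(p' (j+1), p' j) := by
            rw [← hq'j]
            exact (hwp' j hj).trans Sym2.eq_swap
          rcases Sym2.eq_iff.1 hab' with ⟨ha, hb⟩ | ⟨ha, hb⟩ <;> subst ha <;> subst hb
          · exact ⟨p' (j+1), hp'φ2 (j+1) le_rfl (by omega), p' j, Or.inr ⟨j, le_rfl, rfl⟩,
              hfe, rfl⟩
          · exact ⟨p' j, Or.inr ⟨j, le_rfl, rfl⟩, p' (j+1), hp'φ2 (j+1) le_rfl (by omega),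
              hfe.trans Sym2.eq_swap, by rw [mul_comm (sw (p' j)) (sw (p' (j+1)))]; rfl⟩
    · refine ⟨0, 1, 2, 0, 1, ?_, ?_, ?_, ?_, rfl, rfl, hABkey, rfl, rfl, rfl⟩
      · exact (by decide : ([0, 1, 2] : List (Fin 3)).Nodup)
      · exact (by decide : ∀ v : Fin 3, v ∈ ([0, 1, 2] : List (Fin 3)))
      · exact (by decide : ([0, 1, 2, 3] : List (Fin 4)).Nodup)
      · exact (by decide : ∀ e : Fin 4, e ∈ ([0, 1, 2, 3] : List (Fin 4)))
  · rcases Int.units_eq_one_or (G.signOf QA) with hA | hA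
    · have hB : G.signOf QB = -1 := by
        rw [hA, one_mul] at hQAQB; exact hQAQB
      exact ⟨⟨QA, hQAcyc, hf₁QA, hf₂QA, hA⟩, ⟨QB, hQBcyc, hf₁QB, hf₂QB, hB⟩⟩
    · have hB : G.signOf QB = 1 := by
        rcases Int.units_eq_one_or (G.signOf QB) with h | h
        · exact h
        · rw [hA, h] at hQAQB
          exact absurd hQAQB (by decide)
      exact ⟨⟨QB, hQBcyc, hf₁QB, hf₂QB, hB⟩, ⟨QA, hQAcyc, hf₁QA, hf₂QA, hA⟩⟩
end
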